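/- arXiv:1402.5638 — 7 statements merged into one kernel-verified Lean document; each statement's English description precedes it below -/
import Mathlib

section
/- Let U be an evolution family on a Banach space X that has an exponential dichotomy, and let g : ℝ → X be bounded and continuous. If u, v : ℝ → X are bounded continuous functions that both satisfy the mild-solution identity u(t) = U(t,s)u(s) + ∫_s^t U(t,τ)g(τ) dτ for all real t ≥ s, then u(t) = v(t) for all t ∈ ℝ. -/
open MeasureTheory Filter Topology Bornology

noncomputable section

theorem mild_solution_unique_of_exponential_dichotomy
    {X : Type*} [NormedAddCommGroup X] [NormedSpace ℝ X] [CompleteSpace X]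
    (U : ℝ → ℝ → X →L[ℝ] X)
    -- `U` is an evolution family on `X`
    (hUid : ∀ t : ℝ, U t t = ContinuousLinearMap.id ℝ X)
    (hUcomp : ∀ t s r : ℝ, r ≤ s → s ≤ t → (U t s).comp (U s r) = U t r)
    (hUcont : ∀ x : X, ContinuousOn (fun p : ℝ × ℝ => U p.1 p.2 x) {p : ℝ × ℝ | p.2 ≤ p.1})
    -- exponential dichotomy data: projections `P t` and inverses `UQ t s` (`t ≤ s`) of the
    -- restriction of `U s t` to the range of `Q t = I - P t`
    (P : ℝ → X →L[ℝ] X) (UQ : ℝ → ℝ → X →L[ℝ] X) (N δ : ℝ) (hN : 1 ≤ N) (hδ : 0 < δ)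
    (hPproj : ∀ t : ℝ, (P t).comp (P t) = P t)
    (hPbdd : ∃ M : ℝ, ∀ t : ℝ, ‖P t‖ ≤ M)
    (hPcont : ∀ x : X, Continuous fun t : ℝ => P t x)
    (hPU : ∀ t s : ℝ, s ≤ t → (U t s).comp (P s) = (P t).comp (U t s))
    (hUQrange : ∀ t s : ℝ, t ≤ s → ∀ x : X, P t (UQ t s (x - P s x)) = 0)
    (hUQleft : ∀ t s : ℝ, t ≤ s → ∀ x : X, U s t (UQ t s (x - P s x)) = x - P s x)
    (hUQright : ∀ t s : ℝ, t ≤ s → ∀ x : X, UQ t s (U s t x - P s (U s t x)) = x - P t x)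
    (hdich1 : ∀ t s : ℝ, s ≤ t → ∀ x : X, ‖U t s (P s x)‖ ≤ N * Real.exp (-δ * (t - s)) * ‖x‖)
    (hdich2 : ∀ t s : ℝ, t ≤ s → ∀ x : X,
      ‖UQ t s (x - P s x)‖ ≤ N * Real.exp (-δ * (s - t)) * ‖x‖)
    -- `g` bounded continuous
    (g : ℝ → X) (hgcont : Continuous g) (hgbdd : ∃ M : ℝ, ∀ t : ℝ, ‖g t‖ ≤ M)
    -- `u` and `v` are bounded continuous mild solutions
    (u v : ℝ → X)
    (hucont : Continuous u) (hubdd : ∃ M : ℝ, ∀ t : ℝ, ‖u t‖ ≤ M)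
    (hvcont : Continuous v) (hvbdd : ∃ M : ℝ, ∀ t : ℝ, ‖v t‖ ≤ M)
    (hu : ∀ t s : ℝ, s ≤ t → u t = U t s (u s) + ∫ τ in s..t, U t τ (g τ))
    (hv : ∀ t s : ℝ, s ≤ t → v t = U t s (v s) + ∫ τ in s..t, U t τ (g τ)) :
    ∀ t : ℝ, u t = v t := by
  obtain ⟨Mu, hMu⟩ := hubdd
  obtain ⟨Mv, hMv⟩ := hvbdd
  set M := Mu + Mv with hMdef
  have hwbdd : ∀ s : ℝ, ‖u s - v s‖ ≤ M :=
    fun s => (norm_sub_le _ _).trans (add_le_add (hMu s) (hMv s))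
  have hM0 : 0 ≤ M := (norm_nonneg _).trans (hwbdd 0)
  have hw : ∀ t s : ℝ, s ≤ t → u t - v t = U t s (u s - v s) := by
    intro t s h
    rw [hu t s h, hv t s h, map_sub]
    abel
  -- the decaying bound sequence
  have hlim : Tendsto (fun n : ℕ => N * M * Real.exp (-δ * n)) atTop (𝓝 0) := by
    have h1 : ∀ n : ℕ, Real.exp (-δ * n) = (Real.exp (-δ)) ^ n := by
      intro n
      rw [← Real.exp_nat_mul]
      ring_nf
    have h2 : Tendsto (fun n : ℕ => (Real.exp (-δ)) ^ n) atTop (𝓝 0) :=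
      tendsto_pow_atTop_nhds_zero_of_lt_one (Real.exp_pos _).le
        (Real.exp_lt_one_iff.mpr (by linarith))
    have h4 : (fun n : ℕ => N * M * Real.exp (-δ * n))
        = fun n : ℕ => N * M * (Real.exp (-δ)) ^ n := funext fun n => by rw [h1]
    rw [h4]
    simpa using h2.const_mul (N * M)
  intro t
  have hP0 : P t (u t - v t) = 0 := by
    have hbound : ∀ n : ℕ, ‖P t (u t - v t)‖ ≤ N * M * Real.exp (-δ * n) := by
      intro n
      have hs : t - (n : ℝ) ≤ t := by
        have : (0 : ℝ) ≤ n := n.cast_nonneg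
        linarith
      have h1 : P t (u t - v t) = U t (t - n) (P (t - n) (u (t - n) - v (t - n))) := by
        rw [hw t (t - n) hs]
        have := congrArg (fun f : X →L[ℝ] X => f (u (t - n) - v (t - n))) (hPU t (t - n) hs)
        simpa using this.symm
      rw [h1]
      have h2 := hdich1 t (t - n) hs (u (t - n) - v (t - n))
      have h3 : t - (t - (n : ℝ)) = (n : ℝ) := by ring
      rw [h3] at h2
      calc ‖U t (t - n) (P (t - n) (u (t - n) - v (t - n)))‖
          ≤ N * Real.exp (-δ * n) * ‖u (t - n) - v (t - n)‖ := h2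
        _ ≤ N * Real.exp (-δ * n) * M := by
            have hNpos : (0:ℝ) < N := lt_of_lt_of_le one_pos hN
            exact mul_le_mul_of_nonneg_left (hwbdd _)
              (mul_nonneg hNpos.le (Real.exp_pos _).le)
        _ = N * M * Real.exp (-δ * n) := by ring
    have hle : ‖P t (u t - v t)‖ ≤ 0 :=
      ge_of_tendsto hlim (Filter.Eventually.of_forall hbound)
    exact norm_le_zero_iff.mp hle
  have hQ0 : u t - v t - P t (u t - v t) = 0 := by
    have hbound : ∀ n : ℕ, ‖u t - v t - P t (u t - v t)‖ ≤ N * M * Real.exp (-δ * n) := by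
      intro n
      have hs : t ≤ t + (n : ℝ) := le_add_of_nonneg_right n.cast_nonneg
      have h1 : u t - v t - P t (u t - v t)
          = UQ t (t + n) ((u (t + n) - v (t + n)) - P (t + n) (u (t + n) - v (t + n))) := by
        have h := hUQright t (t + n) hs (u t - v t)
        rw [← hw (t + n) t hs] at h
        exact h.symm
      rw [h1]
      have h2 := hdich2 t (t + n) hs (u (t + n) - v (t + n))
      have h3 : t + (n : ℝ) - t = (n : ℝ) := by ring
      rw [h3] at h2
      calc ‖UQ t (t + n) ((u (t + n) - v (t + n)) - P (t + n) (u (t + n) - v (t + n)))‖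
          ≤ N * Real.exp (-δ * n) * ‖u (t + n) - v (t + n)‖ := h2
        _ ≤ N * Real.exp (-δ * n) * M := by
            have hNpos : (0:ℝ) < N := lt_of_lt_of_le one_pos hN
            exact mul_le_mul_of_nonneg_left (hwbdd _)
              (mul_nonneg hNpos.le (Real.exp_pos _).le)
        _ = N * M * Real.exp (-δ * n) := by ring
    have hle : ‖u t - v t - P t (u t - v t)‖ ≤ 0 :=
      ge_of_tendsto hlim (Filter.Eventually.of_forall hbound)
    exact norm_le_zero_iff.mp hle
  have : u t - v t = 0 := by
    have := hQ0
    rw [hP0, sub_zero] at this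
    exact this
  exact sub_eq_zero.mp this
end
end

section
/- Let U be an evolution family on a Banach space X with an exponential dichotomy with constants N ≥ 1, δ > 0, and suppose in addition that for each x ∈ X the maps (t,s) ↦ U(t,s)P(s)x (for t ≥ s) and (t,s) ↦ U_Q(t,s)Q(s)x (for t ≤ s) are continuous. Then for every bounded continuous g : ℝ → X, the formula φ(t) := ∫_{−∞}^{t} U(t,s)P(s)g(s) ds − ∫_{t}^{∞} U_Q(t,s)Q(s)g(s) ds defines, via absolutely convergent Bochner integrals, a bounded continuous function φ : ℝ → X satisfying φ(t) = U(t,s)φ(s) + ∫_{s}^{t} U(t,τ)g(τ) dτ for all t ≥ s; moreover sup_t ‖φ(t)‖ ≤ (2N/δ) sup_t ‖g(t)‖. -/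
/-!
Both integrands are the Green's function of the dichotomy applied to `g`, bounded by
`N ‖g‖∞ e^{-δ|t-s|}`; this gives absolute convergence and the bound `2N/δ ‖g‖∞`. Uniform
boundedness plus strong continuity make `(t, s) ↦ G(t, s) g(s)` jointly continuous on each closed
half-plane; reflecting `s ↦ -s` turns the past half-line into the future one, and after
substituting `s = t + r` dominated convergence gives continuity of `φ`.
For the mild-solution identity apply `U(t,s)` to `φ(s)`: on `τ < s` the cocycle law gives
`U(t,τ)P(τ)`, on `τ > t` the unstable part becomes `U_Q(t,τ)Q(τ)`, and on `(s,t]` it becomes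
`U(t,τ)Q(τ)`, which together with the stable part integrates to `∫_s^t U(t,τ)g(τ) dτ`.
-/

open MeasureTheory Filter Topology Bornology

noncomputable section

open Set Real

theorem continuousOn_clm_apply_of_bounded {𝕜 ι X Y : Type*} [NontriviallyNormedField 𝕜]
    [NormedAddCommGroup X] [NormedSpace 𝕜 X] [NormedAddCommGroup Y] [NormedSpace 𝕜 Y]
    [TopologicalSpace ι] {A : ι → X →L[𝕜] Y} {S : Set ι} {h : ι → X} (C : ℝ)
    (hA : ∀ x, ContinuousOn (fun i => A i x) S) (hbound : ∀ i ∈ S, ∀ x, ‖A i x‖ ≤ C * ‖x‖)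
    (hh : ContinuousOn h S) :
    ContinuousOn (fun i => A i (h i)) S := by
  intro i₀ hi₀
  rw [ContinuousWithinAt, tendsto_iff_norm_sub_tendsto_zero]
  have hsplit : ∀ i, A i (h i) - A i₀ (h i₀) = A i (h i - h i₀) + (A i (h i₀) - A i₀ (h i₀)) :=
    fun i => by rw [map_sub]; abel
  refine squeeze_zero' (Eventually.of_forall fun _ => norm_nonneg _) ?_
    (g := fun i => C * ‖h i - h i₀‖ + ‖A i (h i₀) - A i₀ (h i₀)‖) ?_
  · filter_upwards [self_mem_nhdsWithin] with i hi
    rw [hsplit]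
    exact (norm_add_le _ _).trans (add_le_add_left (hbound i hi _) _)
  · simpa using ((tendsto_iff_norm_sub_tendsto_zero.1 (hh i₀ hi₀)).const_mul C).add
      (tendsto_iff_norm_sub_tendsto_zero.1 (hA (h i₀) i₀ hi₀))

theorem mul_exp_neg_mul_le {N δ d : ℝ} (hN : 0 ≤ N) (hδ : 0 ≤ δ) (hd : 0 ≤ d) :
    N * exp (-δ * d) ≤ N :=
  mul_le_of_le_one_right hN (exp_le_one_iff.2 (by nlinarith))

section HalfLineIntegrals

variable {E : Type*} [NormedAddCommGroup E] [NormedSpace ℝ E]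

theorem setIntegral_Ioi_eq_setIntegral_Ioi_zero_add (f : ℝ → E) (t : ℝ) :
    ∫ s in Ioi t, f s = ∫ r in Ioi 0, f (t + r) := by
  rw [← (measurePreserving_add_left volume t).setIntegral_preimage_emb
    (measurableEmbedding_addLeft t)]
  congr 2
  ext r
  simp

theorem setIntegral_Iio_eq_setIntegral_Ioi_neg (f : ℝ → E) (t : ℝ) :
    ∫ s in Iio t, f s = ∫ s in Ioi (-t), f (-s) := by
  rw [integral_comp_neg_Ioi, neg_neg, integral_Iic_eq_integral_Iio]

theorem integrableOn_exp_neg_mul_sub_Ioi {δ : ℝ} (hδ : 0 < δ) (t : ℝ) :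
    IntegrableOn (fun s => exp (-δ * (s - t))) (Ioi t) := by
  refine IntegrableOn.congr_fun ((exp_neg_integrableOn_Ioi t hδ).const_mul (exp (δ * t)))
    (fun s _ => ?_) measurableSet_Ioi
  rw [← exp_add]
  ring_nf

theorem integral_exp_neg_mul_sub_Ioi {δ : ℝ} (hδ : 0 < δ) (t : ℝ) :
    ∫ s in Ioi t, exp (-δ * (s - t)) = 1 / δ := by
  rw [setIntegral_Ioi_eq_setIntegral_Ioi_zero_add]
  simpa using integral_exp_mul_Ioi (neg_lt_zero.2 hδ) 0

end HalfLineIntegrals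

section ExpDecayKernels

variable {E : Type*} [NormedAddCommGroup E] {F : ℝ × ℝ → E} {C δ : ℝ}

theorem continuousOn_comp_neg_of_le (hF : ContinuousOn F {p | p.2 ≤ p.1}) :
    ContinuousOn (fun p => F (-p)) {p | p.1 ≤ p.2} :=
  hF.comp continuous_neg.continuousOn fun p hp => by simpa using hp

theorem norm_comp_neg_le_of_norm_le_exp
    (hFle : ∀ p ∈ {p : ℝ × ℝ | p.2 ≤ p.1}, ‖F p‖ ≤ C * exp (-δ * (p.1 - p.2))) :
    ∀ p ∈ {p : ℝ × ℝ | p.1 ≤ p.2}, ‖F (-p)‖ ≤ C * exp (-δ * (p.2 - p.1)) := fun p hp => by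
  simpa [neg_add_eq_sub] using hFle (-p) (by simpa using hp)

theorem integrableOn_Ioi_of_norm_le_exp (hF : ContinuousOn F {p | p.1 ≤ p.2})
    (hFle : ∀ p ∈ {p : ℝ × ℝ | p.1 ≤ p.2}, ‖F p‖ ≤ C * exp (-δ * (p.2 - p.1))) (hδ : 0 < δ)
    (t : ℝ) : IntegrableOn (fun s => F (t, s)) (Ioi t) := by
  refine Integrable.mono' ((integrableOn_exp_neg_mul_sub_Ioi hδ t).const_mul C) ?_ ?_
  · exact (hF.comp (by fun_prop) fun s hs => le_of_lt hs).aestronglyMeasurable measurableSet_Ioi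
  · exact (ae_restrict_mem measurableSet_Ioi).mono fun s (hs : t < s) => hFle (t, s) hs.le

theorem integrableOn_Iio_of_norm_le_exp (hF : ContinuousOn F {p | p.2 ≤ p.1})
    (hFle : ∀ p ∈ {p : ℝ × ℝ | p.2 ≤ p.1}, ‖F p‖ ≤ C * exp (-δ * (p.1 - p.2))) (hδ : 0 < δ)
    (t : ℝ) : IntegrableOn (fun s => F (t, s)) (Iio t) := by
  simpa using (integrableOn_Ioi_of_norm_le_exp (continuousOn_comp_neg_of_le hF)
    (norm_comp_neg_le_of_norm_le_exp hFle) hδ (-t)).comp_neg_Iio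

variable [NormedSpace ℝ E]

theorem norm_setIntegral_Ioi_le_of_norm_le_exp
    (hFle : ∀ p ∈ {p : ℝ × ℝ | p.1 ≤ p.2}, ‖F p‖ ≤ C * exp (-δ * (p.2 - p.1))) (hδ : 0 < δ)
    (t : ℝ) : ‖∫ s in Ioi t, F (t, s)‖ ≤ C / δ := by
  calc ‖∫ s in Ioi t, F (t, s)‖ ≤ ∫ s in Ioi t, C * exp (-δ * (s - t)) :=
        norm_integral_le_of_norm_le ((integrableOn_exp_neg_mul_sub_Ioi hδ t).const_mul C)
          ((ae_restrict_mem measurableSet_Ioi).mono fun s (hs : t < s) => hFle (t, s) hs.le)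
    _ = C / δ := by rw [integral_const_mul, integral_exp_neg_mul_sub_Ioi hδ, mul_one_div]

theorem continuous_setIntegral_Ioi_of_norm_le_exp (hF : ContinuousOn F {p | p.1 ≤ p.2})
    (hFle : ∀ p ∈ {p : ℝ × ℝ | p.1 ≤ p.2}, ‖F p‖ ≤ C * exp (-δ * (p.2 - p.1))) (hδ : 0 < δ) :
    Continuous fun t => ∫ s in Ioi t, F (t, s) := by
  rw [funext fun t => setIntegral_Ioi_eq_setIntegral_Ioi_zero_add (fun s => F (t, s)) t]
  have hcont : ∀ r : ℝ, 0 ≤ r → Continuous fun t => F (t, t + r) := fun r hr =>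
    hF.comp_continuous (by fun_prop) fun t => by simpa using hr
  refine continuous_iff_continuousAt.2 fun t₀ => continuousAt_of_dominated
    (bound := fun r => C * exp (-δ * r)) ?_ ?_ ?_ ?_
  · exact Eventually.of_forall fun t => ContinuousOn.aestronglyMeasurable
      (hF.comp (by fun_prop) fun r hr => by simpa using le_of_lt hr) measurableSet_Ioi
  · exact Eventually.of_forall fun t => (ae_restrict_mem measurableSet_Ioi).mono
      fun r (hr : 0 < r) => by simpa using hFle (t, t + r) (by simpa using hr.le)
  · exact (exp_neg_integrableOn_Ioi 0 hδ).const_mul C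
  · exact (ae_restrict_mem measurableSet_Ioi).mono fun r hr => (hcont r (le_of_lt hr)).continuousAt

theorem norm_setIntegral_Iio_le_of_norm_le_exp
    (hFle : ∀ p ∈ {p : ℝ × ℝ | p.2 ≤ p.1}, ‖F p‖ ≤ C * exp (-δ * (p.1 - p.2))) (hδ : 0 < δ)
    (t : ℝ) : ‖∫ s in Iio t, F (t, s)‖ ≤ C / δ := by
  simpa [setIntegral_Iio_eq_setIntegral_Ioi_neg (fun s => F (t, s))] using
    norm_setIntegral_Ioi_le_of_norm_le_exp (norm_comp_neg_le_of_norm_le_exp hFle) hδ (-t)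

theorem continuous_setIntegral_Iio_of_norm_le_exp (hF : ContinuousOn F {p | p.2 ≤ p.1})
    (hFle : ∀ p ∈ {p : ℝ × ℝ | p.2 ≤ p.1}, ‖F p‖ ≤ C * exp (-δ * (p.1 - p.2))) (hδ : 0 < δ) :
    Continuous fun t => ∫ s in Iio t, F (t, s) := by
  refine ((continuous_setIntegral_Ioi_of_norm_le_exp (continuousOn_comp_neg_of_le hF)
    (norm_comp_neg_le_of_norm_le_exp hFle) hδ).comp continuous_neg).congr fun t => ?_
  simp [setIntegral_Iio_eq_setIntegral_Ioi_neg (fun s => F (t, s))]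

end ExpDecayKernels

theorem setIntegral_Iio_sub_setIntegral_Ioi_eq_map_add {E F : Type*} [NormedAddCommGroup E]
    [NormedSpace ℝ E] [CompleteSpace E] [NormedAddCommGroup F] [NormedSpace ℝ F] [CompleteSpace F]
    (L : E →L[ℝ] F) {f₁' f₂' : ℝ → E} {f₁ f₂ h : ℝ → F} {s t : ℝ} (hst : s ≤ t)
    (hf₁ : IntegrableOn f₁ (Iio t)) (hf₁' : IntegrableOn f₁' (Iio s))
    (hf₂' : IntegrableOn f₂' (Ioi s))
    (h₁ : ∀ τ < s, L (f₁' τ) = f₁ τ) (h₂ : ∀ τ ∈ Ioc s t, h τ = L (f₂' τ) + f₁ τ)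
    (h₃ : ∀ τ, t < τ → L (f₂' τ) = f₂ τ) :
    (∫ τ in Iio t, f₁ τ) - ∫ τ in Ioi t, f₂ τ =
      L ((∫ τ in Iio s, f₁' τ) - ∫ τ in Ioi s, f₂' τ) + ∫ τ in s..t, h τ := by
  have hLf₂' : IntegrableOn (fun τ => L (f₂' τ)) (Ioi s) := L.integrable_comp hf₂'
  have hf₁_Iic : IntegrableOn f₁ (Iic t) := by rwa [integrableOn_Iic_iff_integrableOn_Iio]
  have hpast : ∫ τ in Iio t, f₁ τ = (∫ τ in Iio s, f₁ τ) + ∫ τ in Ioc s t, f₁ τ := by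
    rw [← integral_Iic_eq_integral_Iio, ← integral_Iic_eq_integral_Iio,
      ← Iic_union_Ioc_eq_Iic hst, setIntegral_union (Iic_disjoint_Ioc le_rfl) measurableSet_Ioc
        (hf₁_Iic.mono_set (Iic_subset_Iic.2 hst)) (hf₁_Iic.mono_set Ioc_subset_Iic_self)]
  have hfuture : L (∫ τ in Ioi s, f₂' τ) = (∫ τ in Ioc s t, L (f₂' τ)) + ∫ τ in Ioi t, f₂ τ := by
    rw [← L.integral_comp_comm hf₂', ← Ioc_union_Ioi_eq_Ioi hst,
      setIntegral_union (Ioc_disjoint_Ioi le_rfl) measurableSet_Ioi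
        (hLf₂'.mono_set Ioc_subset_Ioi_self) (hLf₂'.mono_set (Ioi_subset_Ioi hst)),
      setIntegral_congr_fun measurableSet_Ioi h₃]
  have hmild : ∫ τ in s..t, h τ = (∫ τ in Ioc s t, L (f₂' τ)) + ∫ τ in Ioc s t, f₁ τ := by
    rw [intervalIntegral.integral_of_le hst, setIntegral_congr_fun measurableSet_Ioc h₂,
      integral_add (hLf₂'.mono_set Ioc_subset_Ioi_self)
        (hf₁_Iic.mono_set Ioc_subset_Iic_self)]
  rw [map_sub, ← L.integral_comp_comm hf₁', setIntegral_congr_fun measurableSet_Iio h₁,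
    hpast, hfuture, hmild]
  abel

section Dichotomy

variable {X : Type*} [NormedAddCommGroup X] [NormedSpace ℝ X] {U UQ : ℝ → ℝ → X →L[ℝ] X}
  {P : ℝ → X →L[ℝ] X} {s t τ : ℝ}

theorem evolution_apply_eq_unstable_add_stable
    (hUcomp : ∀ t s r : ℝ, r ≤ s → s ≤ t → (U t s).comp (U s r) = U t r)
    (hUQleft : ∀ t s : ℝ, t ≤ s → ∀ x : X, U s t (UQ t s (x - P s x)) = x - P s x)
    (hsτ : s ≤ τ) (hτt : τ ≤ t) (x : X) :
    U t τ x = U t s (UQ s τ (x - P τ x)) + U t τ (P τ x) := by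
  rw [← hUcomp t τ s hsτ hτt, ContinuousLinearMap.comp_apply, hUQleft s τ hsτ, map_sub,
    sub_add_cancel]

theorem evolution_apply_unstable_eq_unstable
    (hUcomp : ∀ t s r : ℝ, r ≤ s → s ≤ t → (U t s).comp (U s r) = U t r)
    (hPproj : ∀ t : ℝ, (P t).comp (P t) = P t)
    (hPU : ∀ t s : ℝ, s ≤ t → (U t s).comp (P s) = (P t).comp (U t s))
    (hUQrange : ∀ t s : ℝ, t ≤ s → ∀ x : X, P t (UQ t s (x - P s x)) = 0)
    (hUQleft : ∀ t s : ℝ, t ≤ s → ∀ x : X, U s t (UQ t s (x - P s x)) = x - P s x)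
    (hUQright : ∀ t s : ℝ, t ≤ s → ∀ x : X, UQ t s (U s t x - P s (U s t x)) = x - P t x)
    (hst : s ≤ t) (htτ : t ≤ τ) (x : X) :
    U t s (UQ s τ (x - P τ x)) = UQ t τ (x - P τ x) := by
  set y := U t s (UQ s τ (x - P τ x))
  have hPy : P t y = 0 := by
    rw [← ContinuousLinearMap.comp_apply, ← hPU t s hst, ContinuousLinearMap.comp_apply,
      hUQrange s τ (hst.trans htτ), map_zero]
  have hUy : U τ t y = x - P τ x := by
    rw [← ContinuousLinearMap.comp_apply, hUcomp τ t s hst htτ, hUQleft s τ (hst.trans htτ)]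
  have hPQ : P τ (x - P τ x) = 0 := by
    rw [map_sub, ← ContinuousLinearMap.comp_apply, hPproj, sub_self]
  simpa [hUy, hPQ, hPy] using (hUQright t τ htτ y).symm

variable {N δ : ℝ} {g : ℝ → X}

theorem norm_stable_green_le (hN : 0 ≤ N)
    (hdich1 : ∀ t s : ℝ, s ≤ t → ∀ x : X, ‖U t s (P s x)‖ ≤ N * exp (-δ * (t - s)) * ‖x‖)
    {M : ℝ} (hM : ∀ t, ‖g t‖ ≤ M) :
    ∀ p ∈ {p : ℝ × ℝ | p.2 ≤ p.1},
      ‖U p.1 p.2 (P p.2 (g p.2))‖ ≤ N * M * exp (-δ * (p.1 - p.2)) := fun p hp =>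
  (hdich1 _ _ hp _).trans <| by
    rw [mul_right_comm N M]; exact mul_le_mul_of_nonneg_left (hM _) (by positivity)

theorem norm_unstable_green_le (hN : 0 ≤ N)
    (hdich2 : ∀ t s : ℝ, t ≤ s → ∀ x : X, ‖UQ t s (x - P s x)‖ ≤ N * exp (-δ * (s - t)) * ‖x‖)
    {M : ℝ} (hM : ∀ t, ‖g t‖ ≤ M) :
    ∀ p ∈ {p : ℝ × ℝ | p.1 ≤ p.2},
      ‖UQ p.1 p.2 (g p.2 - P p.2 (g p.2))‖ ≤ N * M * exp (-δ * (p.2 - p.1)) := fun p hp =>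
  (hdich2 _ _ hp _).trans <| by
    rw [mul_right_comm N M]; exact mul_le_mul_of_nonneg_left (hM _) (by positivity)

theorem continuousOn_stable_green (hN : 0 ≤ N) (hδ : 0 ≤ δ)
    (hdich1 : ∀ t s : ℝ, s ≤ t → ∀ x : X, ‖U t s (P s x)‖ ≤ N * exp (-δ * (t - s)) * ‖x‖)
    (hUPcont : ∀ x : X,
      ContinuousOn (fun p : ℝ × ℝ => U p.1 p.2 (P p.2 x)) {p : ℝ × ℝ | p.2 ≤ p.1})
    (hg : Continuous g) :
    ContinuousOn (fun p : ℝ × ℝ => U p.1 p.2 (P p.2 (g p.2))) {p | p.2 ≤ p.1} := by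
  have hUP_le : ∀ p ∈ {p : ℝ × ℝ | p.2 ≤ p.1}, ∀ x, ‖U p.1 p.2 (P p.2 x)‖ ≤ N * ‖x‖ :=
    fun p hp x => (hdich1 _ _ hp x).trans (mul_le_mul_of_nonneg_right
      (mul_exp_neg_mul_le hN hδ (sub_nonneg.2 hp)) (norm_nonneg x))
  exact continuousOn_clm_apply_of_bounded (A := fun p => (U p.1 p.2).comp (P p.2)) N hUPcont
    hUP_le (hg.comp continuous_snd).continuousOn

theorem continuousOn_unstable_green (hN : 0 ≤ N) (hδ : 0 ≤ δ)
    (hdich2 : ∀ t s : ℝ, t ≤ s → ∀ x : X, ‖UQ t s (x - P s x)‖ ≤ N * exp (-δ * (s - t)) * ‖x‖)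
    (hUQcont : ∀ x : X,
      ContinuousOn (fun p : ℝ × ℝ => UQ p.1 p.2 (x - P p.2 x)) {p : ℝ × ℝ | p.1 ≤ p.2})
    (hg : Continuous g) :
    ContinuousOn (fun p : ℝ × ℝ => UQ p.1 p.2 (g p.2 - P p.2 (g p.2))) {p | p.1 ≤ p.2} := by
  have hUQ_le : ∀ p ∈ {p : ℝ × ℝ | p.1 ≤ p.2}, ∀ x, ‖UQ p.1 p.2 (x - P p.2 x)‖ ≤ N * ‖x‖ :=
    fun p hp x => (hdich2 _ _ hp x).trans (mul_le_mul_of_nonneg_right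
      (mul_exp_neg_mul_le hN hδ (sub_nonneg.2 hp)) (norm_nonneg x))
  exact continuousOn_clm_apply_of_bounded
    (A := fun p => (UQ p.1 p.2).comp (ContinuousLinearMap.id ℝ X - P p.2)) N hUQcont
    hUQ_le (hg.comp continuous_snd).continuousOn

end Dichotomy

theorem greens_function_formula_bounded_mild_solution_general
    {X : Type*} [NormedAddCommGroup X] [NormedSpace ℝ X] [CompleteSpace X]
    (U : ℝ → ℝ → X →L[ℝ] X)
    -- `U` is an evolution family on `X`
    (hUcomp : ∀ t s r : ℝ, r ≤ s → s ≤ t → (U t s).comp (U s r) = U t r)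
    -- exponential dichotomy data: projections `P t` and inverses `UQ t s` (`t ≤ s`) of the
    -- restriction of `U s t` to the range of `Q t = I - P t`
    (P : ℝ → X →L[ℝ] X) (UQ : ℝ → ℝ → X →L[ℝ] X) (N δ : ℝ) (hN : 1 ≤ N) (hδ : 0 < δ)
    (hPproj : ∀ t : ℝ, (P t).comp (P t) = P t)
    (hPU : ∀ t s : ℝ, s ≤ t → (U t s).comp (P s) = (P t).comp (U t s))
    (hUQrange : ∀ t s : ℝ, t ≤ s → ∀ x : X, P t (UQ t s (x - P s x)) = 0)
    (hUQleft : ∀ t s : ℝ, t ≤ s → ∀ x : X, U s t (UQ t s (x - P s x)) = x - P s x)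
    (hUQright : ∀ t s : ℝ, t ≤ s → ∀ x : X, UQ t s (U s t x - P s (U s t x)) = x - P t x)
    (hdich1 : ∀ t s : ℝ, s ≤ t → ∀ x : X, ‖U t s (P s x)‖ ≤ N * Real.exp (-δ * (t - s)) * ‖x‖)
    (hdich2 : ∀ t s : ℝ, t ≤ s → ∀ x : X,
      ‖UQ t s (x - P s x)‖ ≤ N * Real.exp (-δ * (s - t)) * ‖x‖)
    -- additional continuity of the Green's function pieces
    (hUPcont : ∀ x : X,
      ContinuousOn (fun p : ℝ × ℝ => U p.1 p.2 (P p.2 x)) {p : ℝ × ℝ | p.2 ≤ p.1})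
    (hUQcont : ∀ x : X,
      ContinuousOn (fun p : ℝ × ℝ => UQ p.1 p.2 (x - P p.2 x)) {p : ℝ × ℝ | p.1 ≤ p.2})
    -- `g` bounded continuous
    (g : ℝ → X) (hgcont : Continuous g) (hgbdd : ∃ M : ℝ, ∀ t : ℝ, ‖g t‖ ≤ M) :
    (∀ t : ℝ, IntegrableOn (fun s => U t s (P s (g s))) (Set.Iio t)) ∧
    (∀ t : ℝ, IntegrableOn (fun s => UQ t s (g s - P s (g s))) (Set.Ioi t)) ∧
    ∃ φ : ℝ → X,
      (∀ t : ℝ, φ t = (∫ s in Set.Iio t, U t s (P s (g s))) -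
          ∫ s in Set.Ioi t, UQ t s (g s - P s (g s))) ∧
      Continuous φ ∧
      (∀ M : ℝ, (∀ t : ℝ, ‖g t‖ ≤ M) → ∀ t : ℝ, ‖φ t‖ ≤ (2 * N / δ) * M) ∧
      (∀ t s : ℝ, s ≤ t → φ t = U t s (φ s) + ∫ τ in s..t, U t τ (g τ)) := by
  obtain ⟨M₀, hM₀⟩ := hgbdd
  have hN₀ : 0 ≤ N := zero_le_one.trans hN
  have hG₁ := continuousOn_stable_green hN₀ hδ.le hdich1 hUPcont hgcont
  have hG₂ := continuousOn_unstable_green hN₀ hδ.le hdich2 hUQcont hgcont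
  have hG₁le := norm_stable_green_le hN₀ hdich1 hM₀
  have hG₂le := norm_unstable_green_le hN₀ hdich2 hM₀
  have hi₁ := integrableOn_Iio_of_norm_le_exp hG₁ hG₁le hδ
  have hi₂ := integrableOn_Ioi_of_norm_le_exp hG₂ hG₂le hδ
  refine ⟨hi₁, hi₂, _, fun t => rfl, ?_, fun M hM t => ?_, fun t s hst => ?_⟩
  · exact (continuous_setIntegral_Iio_of_norm_le_exp hG₁ hG₁le hδ).sub
      (continuous_setIntegral_Ioi_of_norm_le_exp hG₂ hG₂le hδ)
  · calc _ ≤ N * M / δ + N * M / δ := (norm_sub_le _ _).trans (add_le_add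
          (norm_setIntegral_Iio_le_of_norm_le_exp (norm_stable_green_le hN₀ hdich1 hM) hδ t)
          (norm_setIntegral_Ioi_le_of_norm_le_exp (norm_unstable_green_le hN₀ hdich2 hM) hδ t))
      _ = 2 * N / δ * M := by ring
  · exact setIntegral_Iio_sub_setIntegral_Ioi_eq_map_add (U t s) hst (hi₁ t) (hi₁ s) (hi₂ s)
      (fun τ hτ => by rw [← ContinuousLinearMap.comp_apply, hUcomp t s τ hτ.le hst])
      (fun τ hτ => evolution_apply_eq_unstable_add_stable hUcomp hUQleft hτ.1.le hτ.2 _)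
      (fun τ hτ => evolution_apply_unstable_eq_unstable hUcomp hPproj hPU hUQrange hUQleft
        hUQright hst hτ.le _)

theorem greens_function_formula_bounded_mild_solution
    {X : Type*} [NormedAddCommGroup X] [NormedSpace ℝ X] [CompleteSpace X]
    (U : ℝ → ℝ → X →L[ℝ] X)
    -- `U` is an evolution family on `X`
    (hUid : ∀ t : ℝ, U t t = ContinuousLinearMap.id ℝ X)
    (hUcomp : ∀ t s r : ℝ, r ≤ s → s ≤ t → (U t s).comp (U s r) = U t r)
    (hUcont : ∀ x : X, ContinuousOn (fun p : ℝ × ℝ => U p.1 p.2 x) {p : ℝ × ℝ | p.2 ≤ p.1})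
    -- exponential dichotomy data: projections `P t` and inverses `UQ t s` (`t ≤ s`) of the
    -- restriction of `U s t` to the range of `Q t = I - P t`
    (P : ℝ → X →L[ℝ] X) (UQ : ℝ → ℝ → X →L[ℝ] X) (N δ : ℝ) (hN : 1 ≤ N) (hδ : 0 < δ)
    (hPproj : ∀ t : ℝ, (P t).comp (P t) = P t)
    (hPbdd : ∃ M : ℝ, ∀ t : ℝ, ‖P t‖ ≤ M)
    (hPcont : ∀ x : X, Continuous fun t : ℝ => P t x)
    (hPU : ∀ t s : ℝ, s ≤ t → (U t s).comp (P s) = (P t).comp (U t s))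
    (hUQrange : ∀ t s : ℝ, t ≤ s → ∀ x : X, P t (UQ t s (x - P s x)) = 0)
    (hUQleft : ∀ t s : ℝ, t ≤ s → ∀ x : X, U s t (UQ t s (x - P s x)) = x - P s x)
    (hUQright : ∀ t s : ℝ, t ≤ s → ∀ x : X, UQ t s (U s t x - P s (U s t x)) = x - P t x)
    (hdich1 : ∀ t s : ℝ, s ≤ t → ∀ x : X, ‖U t s (P s x)‖ ≤ N * Real.exp (-δ * (t - s)) * ‖x‖)
    (hdich2 : ∀ t s : ℝ, t ≤ s → ∀ x : X,
      ‖UQ t s (x - P s x)‖ ≤ N * Real.exp (-δ * (s - t)) * ‖x‖)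
    -- additional continuity of the Green's function pieces
    (hUPcont : ∀ x : X,
      ContinuousOn (fun p : ℝ × ℝ => U p.1 p.2 (P p.2 x)) {p : ℝ × ℝ | p.2 ≤ p.1})
    (hUQcont : ∀ x : X,
      ContinuousOn (fun p : ℝ × ℝ => UQ p.1 p.2 (x - P p.2 x)) {p : ℝ × ℝ | p.1 ≤ p.2})
    -- `g` bounded continuous
    (g : ℝ → X) (hgcont : Continuous g) (hgbdd : ∃ M : ℝ, ∀ t : ℝ, ‖g t‖ ≤ M) :
    (∀ t : ℝ, IntegrableOn (fun s => U t s (P s (g s))) (Set.Iio t)) ∧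
    (∀ t : ℝ, IntegrableOn (fun s => UQ t s (g s - P s (g s))) (Set.Ioi t)) ∧
    ∃ φ : ℝ → X,
      (∀ t : ℝ, φ t = (∫ s in Set.Iio t, U t s (P s (g s))) -
          ∫ s in Set.Ioi t, UQ t s (g s - P s (g s))) ∧
      Continuous φ ∧
      (∀ M : ℝ, (∀ t : ℝ, ‖g t‖ ≤ M) → ∀ t : ℝ, ‖φ t‖ ≤ (2 * N / δ) * M) ∧
      (∀ t s : ℝ, s ≤ t → φ t = U t s (φ s) + ∫ τ in s..t, U t τ (g τ)) :=
  greens_function_formula_bounded_mild_solution_general U hUcomp P UQ N δ hN hδ hPproj hPU hUQrange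
    hUQleft hUQright hdich1 hdich2 hUPcont hUQcont g hgcont hgbdd
end
end

section
/- Assume U is an exponentially stable evolution family on X satisfying the Y-smoothing estimate with constants α ∈ (0,1), c, δ > 0, and assume the bi-almost automorphy hypothesis: for every sequence of real numbers (s'_n) there is a subsequence (s_n) such that for every x ∈ X and all t > s, U(t+s_n, s+s_n)x → U(t,s)x in the norm of Y as n → ∞. If h ∈ AA(X) (almost automorphic functions are automatically bounded), then the function (Rh)(t) := ∫_{−∞}^{t} U(t,s)h(s) ds (Bochner integral convergent in Y) belongs to AA(Y). -/
/-!
Write `R f = evolutionConvolution V f`. Substituting `s ↦ s + σₙ` writes `(R f)(t + σₙ)` as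
`∫_{s<t} V(t+σₙ, s+σₙ) f(s+σₙ) ds`. If `f(· + σₙ) → g` pointwise and the translated operators
converge strongly, the integrands converge to `V(t,s) g(s)`, and the smoothing estimate dominates
them by `c e^{-δ(t-s)/2} (t-s)^{-α} sup ‖f‖`, which is integrable because `α < 1`. Dominated convergence
gives `(R f)(t + σₙ) → (R g)(t)`; this one transfer step yields the forward limit (`f = h`), the
backward limit (`f = g`, shifts `-σₙ`) and the continuity of `R h` (shifts `σₙ → 0`).

Measurability of the integrands comes from the factorisation `V(t,s) = V(t,m) U(m,s)` for
`s < m < t`, which makes `s ↦ V(t,s) f(s)` continuous on `s < t` for continuous `f`; the limit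
function `g` is a pointwise limit of continuous translates of `h`.
-/

open MeasureTheory Filter Topology Bornology

noncomputable section

/-- A continuous function `f : ℝ → Z` is almost automorphic if for every sequence of reals
there is a subsequence `s ∘ k` and a function `g` with `f (t + s (k n)) → g t` and
`g (t - s (k n)) → f t` pointwise in norm. -/
def AlmostAutomorphicFn {Z : Type*} [NormedAddCommGroup Z] (f : ℝ → Z) : Prop :=
  Continuous f ∧ ∀ s' : ℕ → ℝ, ∃ k : ℕ → ℕ, StrictMono k ∧ ∃ g : ℝ → Z,
    (∀ t : ℝ, Tendsto (fun n => f (t + s' (k n))) atTop (𝓝 (g t))) ∧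
    (∀ t : ℝ, Tendsto (fun n => g (t - s' (k n))) atTop (𝓝 (f t)))

open Set

theorem AlmostAutomorphicFn.exists_norm_le {Z : Type*} [NormedAddCommGroup Z] {f : ℝ → Z}
    (hf : AlmostAutomorphicFn f) : ∃ M, ∀ t, ‖f t‖ ≤ M := by
  by_contra! hunbdd
  choose u hu using fun n : ℕ => hunbdd n
  obtain ⟨k, hk, g, hfg, -⟩ := hf.2 u
  have htop : Tendsto (fun n => ‖f (0 + u (k n))‖) atTop atTop :=
    tendsto_atTop_mono (fun n => by simpa using (hu (k n)).le)
      (tendsto_natCast_atTop_atTop.comp hk.tendsto_atTop)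
  exact not_tendsto_nhds_of_tendsto_atTop htop _ (hfg 0).norm

theorem Filter.Tendsto.clm_apply_of_eventually_norm_le {ι 𝕜 E F : Type*}
    [NontriviallyNormedField 𝕜] [SeminormedAddCommGroup E] [NormedSpace 𝕜 E]
    [SeminormedAddCommGroup F] [NormedSpace 𝕜 F] {l : Filter ι} {T : ι → E →L[𝕜] F}
    {f : ι → E} {x : E} {y : F} {C : ℝ}
    (hT : Tendsto (fun i => T i x) l (𝓝 y)) (hTC : ∀ᶠ i in l, ‖T i‖ ≤ C)
    (hf : Tendsto f l (𝓝 x)) : Tendsto (fun i => T i (f i)) l (𝓝 y) := by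
  have hsmall : Tendsto (fun i => T i (f i - x)) l (𝓝 0) := by
    refine squeeze_zero_norm' (hTC.mono fun i hi => (T i).le_of_opNorm_le hi _) ?_
    simpa using ((hf.sub_const x).norm.const_mul C)
  simpa using hsmall.add hT

theorem integrableOn_comp_sub_left_Iio {E : Type*} [NormedAddCommGroup E] {w : ℝ → E}
    (hw : IntegrableOn w (Ioi 0)) (t : ℝ) : IntegrableOn (fun s => w (t - s)) (Iio t) := by
  have := ((Measure.measurePreserving_sub_left volume t).integrableOn_comp_preimage
    (MeasurableEquiv.subLeft t).measurableEmbedding).2 hw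
  simpa [Function.comp_def] using this

theorem setIntegral_Iio_comp_add_right {E : Type*} [NormedAddCommGroup E] [NormedSpace ℝ E]
    (F : ℝ → E) (t σ : ℝ) : ∫ s in Iio t, F (s + σ) = ∫ s in Iio (t + σ), F s := by
  simpa using (measurePreserving_add_right volume σ).setIntegral_preimage_emb
    (measurableEmbedding_addRight σ) F (Iio (t + σ))

theorem integrableOn_mul_exp_mul_rpow_Ioi {b α : ℝ} (c : ℝ) (hb : 0 < b) (hα : α < 1) :
    IntegrableOn (fun r => c * Real.exp (-b * r) * r ^ (-α)) (Ioi 0) := by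
  have hΓ : IntegrableOn (fun r : ℝ => c * (r ^ (-α) * Real.exp (-b * r ^ (1 : ℝ)))) (Ioi 0) :=
    (integrableOn_rpow_mul_exp_neg_mul_rpow (by linarith) one_pos hb).const_mul c
  refine hΓ.congr_fun (fun r _ => ?_) measurableSet_Ioi
  simp only [Real.rpow_one]
  ring

section Smoothing

variable {X Y : Type*} [NormedAddCommGroup X] [NormedSpace ℝ X]
  [NormedAddCommGroup Y] [NormedSpace ℝ Y]

theorem continuousOn_apply_of_evolutionFamily {U : ℝ → ℝ → X →L[ℝ] X}
    {V : ℝ → ℝ → X →L[ℝ] Y} {J : Y →L[ℝ] X} {N δ : ℝ}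
    (hUcomp : ∀ t s r : ℝ, r ≤ s → s ≤ t → (U t s).comp (U s r) = U t r)
    (hUcont : ∀ x : X, ContinuousOn (fun p : ℝ × ℝ => U p.1 p.2 x) {p : ℝ × ℝ | p.2 ≤ p.1})
    (hstab : ∀ t s : ℝ, s ≤ t → ‖U t s‖ ≤ N * Real.exp (-δ * (t - s)))
    (hJinj : Function.Injective J) (hJV : ∀ t s : ℝ, s < t → ∀ x : X, J (V t s x) = U t s x)
    {f : ℝ → X} (hf : Continuous f) (t : ℝ) :
    ContinuousOn (fun s => V t s (f s)) (Iio t) := by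
  intro s₀ hs₀
  obtain ⟨m, hs₀m, hmt⟩ := exists_between (mem_Iio.1 hs₀)
  have hUx : ∀ x, ContinuousAt (fun s => U m s x) s₀ := fun x =>
    ((hUcont x).continuousAt (mem_of_superset
      ((isOpen_lt continuous_snd continuous_fst).mem_nhds hs₀m) fun _ => le_of_lt)).comp
      (Continuous.prodMk_right m).continuousAt
  have hUbdd : ∀ᶠ s in 𝓝 s₀, ‖U m s‖ ≤ N * Real.exp (-δ * (m - s₀)) + 1 := by
    have hbound : Continuous fun s => N * Real.exp (-δ * (m - s)) := by fun_prop
    filter_upwards [eventually_le_nhds hs₀m,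
      (hbound.tendsto s₀).eventually_lt_const (lt_add_one _)] with s hsm hs
    exact (hstab m s hsm).trans hs.le
  have hUf : ContinuousAt (fun s => U m s (f s)) s₀ :=
    (hUx (f s₀)).tendsto.clm_apply_of_eventually_norm_le hUbdd hf.continuousAt
  have hfactor : ∀ s < m, V t m (U m s (f s)) = V t s (f s) := fun s hs => hJinj <| by
    rw [hJV t s (hs.trans hmt), hJV t m hmt, ← ContinuousLinearMap.comp_apply,
      hUcomp t m s hs.le hmt.le]
  exact (((V t m).continuous.continuousAt.comp hUf).congr
    (eventually_of_mem (Iio_mem_nhds hs₀m) hfactor)).continuousWithinAt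

theorem aestronglyMeasurable_apply_of_tendsto {V : ℝ → ℝ → X →L[ℝ] Y}
    (hVcont : ∀ t (f : ℝ → X), Continuous f → ContinuousOn (fun s => V t s (f s)) (Iio t))
    {F : ℕ → ℝ → X} {f : ℝ → X} (hF : ∀ n, Continuous (F n))
    (hFf : ∀ s, Tendsto (fun n => F n s) atTop (𝓝 (f s))) (t : ℝ) :
    AEStronglyMeasurable (fun s => V t s (f s)) (volume.restrict (Iio t)) :=
  aestronglyMeasurable_of_tendsto_ae atTop
    (fun n => (hVcont t _ (hF n)).aestronglyMeasurable measurableSet_Iio)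
    (ae_of_all _ fun s => ((V t s).continuous.tendsto _).comp (hFf s))

def evolutionConvolution (V : ℝ → ℝ → X →L[ℝ] Y) (f : ℝ → X) (t : ℝ) : Y :=
  ∫ s in Iio t, V t s (f s)

variable {V : ℝ → ℝ → X →L[ℝ] Y} {w : ℝ → ℝ} {f : ℝ → X} {M : ℝ}

theorem integrableOn_apply_of_opNorm_le (hw : IntegrableOn w (Ioi 0))
    (hVw : ∀ t s, s < t → ‖V t s‖ ≤ w (t - s)) {t : ℝ}
    (hmeas : AEStronglyMeasurable (fun s => V t s (f s)) (volume.restrict (Iio t)))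
    (hfM : ∀ s, ‖f s‖ ≤ M) : IntegrableOn (fun s => V t s (f s)) (Iio t) :=
  ((integrableOn_comp_sub_left_Iio hw t).mul_const M).mono' hmeas <| by
    filter_upwards [ae_restrict_mem measurableSet_Iio] with s hs
    exact (V t s).le_of_opNorm_le_of_le (hVw t s hs) (hfM s)

theorem tendsto_evolutionConvolution_add (hw : IntegrableOn w (Ioi 0))
    (hVw : ∀ t s, s < t → ‖V t s‖ ≤ w (t - s))
    (hmeas : ∀ t, AEStronglyMeasurable (fun s => V t s (f s)) (volume.restrict (Iio t)))
    (hfM : ∀ s, ‖f s‖ ≤ M) {g : ℝ → X} {t : ℝ} {σ : ℕ → ℝ}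
    (hfg : ∀ s < t, Tendsto (fun n => f (s + σ n)) atTop (𝓝 (g s)))
    (hVσ : ∀ x, ∀ s < t, Tendsto (fun n => V (t + σ n) (s + σ n) x) atTop (𝓝 (V t s x))) :
    Tendsto (fun n => evolutionConvolution V f (t + σ n)) atTop
      (𝓝 (evolutionConvolution V g t)) := by
  have hshift : ∀ n, ∫ s in Iio t, V (t + σ n) (s + σ n) (f (s + σ n)) =
      evolutionConvolution V f (t + σ n) := fun n =>
    setIntegral_Iio_comp_add_right (fun s => V (t + σ n) s (f s)) t (σ n)
  have hVσw : ∀ n, ∀ s < t, ‖V (t + σ n) (s + σ n)‖ ≤ w (t - s) := fun n s hs => by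
    simpa using hVw (t + σ n) (s + σ n) (by linarith)
  refine Tendsto.congr hshift <|
    tendsto_integral_of_dominated_convergence (fun s => w (t - s) * M) (fun n => ?_)
      ((integrableOn_comp_sub_left_Iio hw t).mul_const M) (fun n => ?_) ?_
  · have hmp := (measurePreserving_add_right volume (σ n)).restrict_preimage_emb
      (measurableEmbedding_addRight (σ n)) (Iio (t + σ n))
    rw [preimage_add_const_Iio, add_sub_cancel_right] at hmp
    exact (hmeas (t + σ n)).comp_measurePreserving hmp
  · filter_upwards [ae_restrict_mem measurableSet_Iio] with s hs
    exact (V _ _).le_of_opNorm_le_of_le (hVσw n s hs) (hfM _)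
  · filter_upwards [ae_restrict_mem measurableSet_Iio] with s hs
    exact (hVσ (g s) s hs).clm_apply_of_eventually_norm_le
      (Eventually.of_forall fun n => hVσw n s hs) (hfg s hs)

theorem continuous_evolutionConvolution (hw : IntegrableOn w (Ioi 0))
    (hVw : ∀ t s, s < t → ‖V t s‖ ≤ w (t - s))
    (hVAA : ∀ s' : ℕ → ℝ, ∃ k : ℕ → ℕ, StrictMono k ∧ ∀ (x : X) (t s : ℝ), s < t →
      Tendsto (fun n => V (t + s' (k n)) (s + s' (k n)) x) atTop (𝓝 (V t s x)))
    (hmeas : ∀ t, AEStronglyMeasurable (fun s => V t s (f s)) (volume.restrict (Iio t)))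
    (hf : Continuous f) (hfM : ∀ s, ‖f s‖ ≤ M) : Continuous (evolutionConvolution V f) := by
  refine continuous_iff_seqContinuous.2 fun u t₀ hu => tendsto_of_subseq_tendsto fun ns hns => ?_
  obtain ⟨k, hk, hVk⟩ := hVAA fun n => u (ns n) - t₀
  have hσ : Tendsto (fun n => u (ns (k n)) - t₀) atTop (𝓝 0) := by
    simpa using ((hu.comp hns).comp hk.tendsto_atTop).sub_const t₀
  refine ⟨k, ?_⟩
  simpa using tendsto_evolutionConvolution_add hw hVw hmeas hfM
    (fun s _ => hf.continuousAt.tendsto.comp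
      (by simpa using (tendsto_const_nhds (x := s)).add hσ))
    (fun x s hs => hVk x t₀ s hs)

end Smoothing

theorem convolution_preserves_almost_automorphy_general
    {X Y : Type*} [NormedAddCommGroup X] [NormedSpace ℝ X]
    [NormedAddCommGroup Y] [NormedSpace ℝ Y]
    (U : ℝ → ℝ → X →L[ℝ] X) (V : ℝ → ℝ → X →L[ℝ] Y) (J : Y →L[ℝ] X)
    (N c δ α : ℝ) (hc : 0 < c) (hδ : 0 < δ) (hα1 : α < 1)
    -- `U` is an evolution family on `X`
    (hUcomp : ∀ t s r : ℝ, r ≤ s → s ≤ t → (U t s).comp (U s r) = U t r)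
    (hUcont : ∀ x : X, ContinuousOn (fun p : ℝ × ℝ => U p.1 p.2 x) {p : ℝ × ℝ | p.2 ≤ p.1})
    -- exponential stability of `U` and the `Y`-smoothing estimate: `J : Y ↪ X` is a continuous
    -- embedding and `V t s` is `U t s` viewed as an operator from `X` to `Y` (for `s < t`)
    (hstab : ∀ t s : ℝ, s ≤ t → ‖U t s‖ ≤ N * Real.exp (-δ * (t - s)))
    (hJinj : Function.Injective J)
    (hJV : ∀ t s : ℝ, s < t → ∀ x : X, J (V t s x) = U t s x)
    (hV : ∀ t s : ℝ, s < t → ∀ x : X,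
      ‖V t s x‖ ≤ c * Real.exp (-(δ / 2) * (t - s)) * (t - s) ^ (-α) * ‖x‖)
    -- bi-almost automorphy of `(t,s) ↦ U (t, s)` in the norm of `Y`
    (hbiAA : ∀ s' : ℕ → ℝ, ∃ k : ℕ → ℕ, StrictMono k ∧ ∀ (x : X) (t s : ℝ), s < t →
      Tendsto (fun n => V (t + s' (k n)) (s + s' (k n)) x) atTop (𝓝 (V t s x)))
    -- `h` is almost automorphic (hence bounded)
    (h : ℝ → X) (hh : AlmostAutomorphicFn h) :
    (∀ t : ℝ, IntegrableOn (fun s => V t s (h s)) (Set.Iio t)) ∧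
    AlmostAutomorphicFn (fun t : ℝ => ∫ s in Set.Iio t, V t s (h s)) := by
  obtain ⟨M, hM⟩ := hh.exists_norm_le
  have hw := integrableOn_mul_exp_mul_rpow_Ioi c (half_pos hδ) hα1
  have hVw : ∀ t s, s < t → ‖V t s‖ ≤ c * Real.exp (-(δ / 2) * (t - s)) * (t - s) ^ (-α) :=
    fun t s hst => (V t s).opNorm_le_bound
      (by have := Real.rpow_nonneg (sub_nonneg.2 hst.le) (-α); positivity) (hV t s hst)
  have hVcont : ∀ t (f : ℝ → X), Continuous f → ContinuousOn (fun s => V t s (f s)) (Iio t) :=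
    fun t _ hf => continuousOn_apply_of_evolutionFamily hUcomp hUcont hstab hJinj hJV hf t
  have hmeas_h : ∀ t, AEStronglyMeasurable (fun s => V t s (h s)) (volume.restrict (Iio t)) :=
    fun t => (hVcont t h hh.1).aestronglyMeasurable measurableSet_Iio
  refine ⟨fun t => integrableOn_apply_of_opNorm_le hw hVw (hmeas_h t) hM,
    continuous_evolutionConvolution hw hVw hbiAA hmeas_h hh.1 hM, fun s' => ?_⟩
  obtain ⟨k₁, hk₁, g, hhg, hgh⟩ := hh.2 s'
  obtain ⟨k₂, hk₂, hV₂⟩ := hbiAA fun n => s' (k₁ n)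
  obtain ⟨k₃, hk₃, hV₃⟩ := hbiAA fun n => -s' (k₁ (k₂ n))
  have hgM s : ‖g s‖ ≤ M := le_of_tendsto (hhg s).norm (Eventually.of_forall fun _ => hM _)
  have hmeas_g := aestronglyMeasurable_apply_of_tendsto hVcont
    (fun n => hh.1.comp (continuous_add_const (s' (k₁ n)))) hhg
  refine ⟨k₁ ∘ k₂ ∘ k₃, hk₁.comp (hk₂.comp hk₃), evolutionConvolution V g, fun t => ?_,
    fun t => ?_⟩
  · exact tendsto_evolutionConvolution_add hw hVw hmeas_h hM
      (fun s _ => (hhg s).comp (hk₂.comp hk₃).tendsto_atTop)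
      (fun x s hs => (hV₂ x t s hs).comp hk₃.tendsto_atTop)
  · have hgh' : ∀ s, Tendsto (fun n => g (s + -s' (k₁ (k₂ (k₃ n))))) atTop (𝓝 (h s)) :=
      fun s => by
        simpa [sub_eq_add_neg, Function.comp_def] using (hgh s).comp (hk₂.comp hk₃).tendsto_atTop
    simpa [sub_eq_add_neg, evolutionConvolution] using
      tendsto_evolutionConvolution_add hw hVw hmeas_g hgM (fun s _ => hgh' s)
        (fun x s hs => hV₃ x t s hs)

theorem convolution_preserves_almost_automorphy
    {X Y : Type*} [NormedAddCommGroup X] [NormedSpace ℝ X] [CompleteSpace X]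
    [NormedAddCommGroup Y] [NormedSpace ℝ Y] [CompleteSpace Y]
    (U : ℝ → ℝ → X →L[ℝ] X) (V : ℝ → ℝ → X →L[ℝ] Y) (J : Y →L[ℝ] X)
    (N c δ α : ℝ) (hN : 1 ≤ N) (hc : 0 < c) (hδ : 0 < δ) (hα0 : 0 < α) (hα1 : α < 1)
    -- `U` is an evolution family on `X`
    (hUid : ∀ t : ℝ, U t t = ContinuousLinearMap.id ℝ X)
    (hUcomp : ∀ t s r : ℝ, r ≤ s → s ≤ t → (U t s).comp (U s r) = U t r)
    (hUcont : ∀ x : X, ContinuousOn (fun p : ℝ × ℝ => U p.1 p.2 x) {p : ℝ × ℝ | p.2 ≤ p.1})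
    -- exponential stability of `U` and the `Y`-smoothing estimate: `J : Y ↪ X` is a continuous
    -- embedding and `V t s` is `U t s` viewed as an operator from `X` to `Y` (for `s < t`)
    (hstab : ∀ t s : ℝ, s ≤ t → ‖U t s‖ ≤ N * Real.exp (-δ * (t - s)))
    (hJinj : Function.Injective J)
    (hJV : ∀ t s : ℝ, s < t → ∀ x : X, J (V t s x) = U t s x)
    (hV : ∀ t s : ℝ, s < t → ∀ x : X,
      ‖V t s x‖ ≤ c * Real.exp (-(δ / 2) * (t - s)) * (t - s) ^ (-α) * ‖x‖)
    -- bi-almost automorphy of `(t,s) ↦ U (t, s)` in the norm of `Y`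
    (hbiAA : ∀ s' : ℕ → ℝ, ∃ k : ℕ → ℕ, StrictMono k ∧ ∀ (x : X) (t s : ℝ), s < t →
      Tendsto (fun n => V (t + s' (k n)) (s + s' (k n)) x) atTop (𝓝 (V t s x)))
    -- `h` is almost automorphic (hence bounded)
    (h : ℝ → X) (hh : AlmostAutomorphicFn h) :
    (∀ t : ℝ, IntegrableOn (fun s => V t s (h s)) (Set.Iio t)) ∧
    AlmostAutomorphicFn (fun t : ℝ => ∫ s in Set.Iio t, V t s (h s)) :=
  convolution_preserves_almost_automorphy_general U V J N c δ α hc hδ hα1 hUcomp hUcont hstab hJinj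
    hJV hV hbiAA h hh
end
end

section
/- Assume U is an exponentially stable evolution family on X satisfying the Y-smoothing estimate with constants α ∈ (0,1), c, δ > 0, and assume moreover that for every t > s the operator U(t,s) is compact as an operator from X to Y. Let B(s) ∈ B(BC(ℝ,Y), X) with C₀ := sup_s ‖B(s)‖ < ∞ and s ↦ B(s)u continuous for each u, let L > 0, and let f : ℝ × Y → X be continuous with M := sup{‖f(s,φ)‖_X : s ∈ ℝ, ‖φ‖_Y ≤ L} < ∞. Then for each fixed t ∈ ℝ, the set { (Su)(t) : u ∈ BC(ℝ,Y), ‖u‖_{Y,∞} ≤ L } is relatively compact in Y, where (Su)(t) := ∫_{−∞}^{t} U(t,s)[B(s)u + f(s,u(s))] ds. -/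
open MeasureTheory Filter Topology Bornology

noncomputable section

lemma aux_exp_integrableOn_Iio (b t : ℝ) (hb : 0 < b) :
    IntegrableOn (fun s : ℝ => Real.exp (-b * (t - s))) (Set.Iio t) := by
  have hmp : MeasurePreserving (fun x : ℝ => t - x) volume volume :=
    Measure.measurePreserving_sub_left volume t
  have hemb : MeasurableEmbedding (fun x : ℝ => t - x) :=
    (MeasurableEquiv.subLeft t).measurableEmbedding
  have h := (hmp.integrableOn_comp_preimage hemb
    (f := fun s : ℝ => Real.exp (-b * (t - s))) (s := Set.Iio t))
  rw [← h]
  have hpre : (fun x : ℝ => t - x) ⁻¹' Set.Iio t = Set.Ioi 0 := by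
    ext x; simp only [Set.mem_preimage, Set.mem_Iio, Set.mem_Ioi]
    constructor <;> intro hx <;> linarith
  have hcomp : ((fun s : ℝ => Real.exp (-b * (t - s))) ∘ (fun x : ℝ => t - x))
      = fun x : ℝ => Real.exp (-b * x) := by
    funext x; simp [Function.comp, sub_sub_cancel]
  rw [hpre, hcomp]
  exact exp_neg_integrableOn_Ioi 0 hb

lemma aux_rpow_integrableOn_Ico (t ε α : ℝ) (hα1 : α < 1) (hε : 0 ≤ ε) :
    IntegrableOn (fun s : ℝ => (t - s) ^ (-α)) (Set.Ico (t - ε) t) := by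
  have hmp : MeasurePreserving (fun x : ℝ => t - x) volume volume :=
    Measure.measurePreserving_sub_left volume t
  have hemb : MeasurableEmbedding (fun x : ℝ => t - x) :=
    (MeasurableEquiv.subLeft t).measurableEmbedding
  have h := (hmp.integrableOn_comp_preimage hemb
    (f := fun s : ℝ => (t - s) ^ (-α)) (s := Set.Ico (t - ε) t))
  rw [← h]
  have hpre : (fun x : ℝ => t - x) ⁻¹' Set.Ico (t - ε) t = Set.Ioc 0 ε := by
    ext x; simp only [Set.mem_preimage, Set.mem_Ico, Set.mem_Ioc]
    constructor <;> intro hx <;> constructor <;> linarith [hx.1, hx.2]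
  have hcomp : ((fun s : ℝ => (t - s) ^ (-α)) ∘ (fun x : ℝ => t - x))
      = fun x : ℝ => x ^ (-α) := by
    funext x; simp [Function.comp, sub_sub_cancel]
  rw [hpre, hcomp]
  have := intervalIntegral.intervalIntegrable_rpow' (a := 0) (b := ε)
    (r := -α) (by linarith)
  exact (intervalIntegrable_iff_integrableOn_Ioc_of_le hε).mp this

lemma aux_rpow_integral (t ε α : ℝ) (hα1 : α < 1) (hε : 0 ≤ ε) :
    ∫ s in Set.Ico (t - ε) t, (t - s) ^ (-α) = ε ^ (1 - α) / (1 - α) := by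
  rw [setIntegral_congr_set Ico_ae_eq_Ioc,
    ← intervalIntegral.integral_of_le (by linarith : t - ε ≤ t)]
  have h := intervalIntegral.integral_comp_sub_left (a := t - ε) (b := t)
    (fun x : ℝ => x ^ (-α)) t
  rw [h]
  simp only [sub_self, sub_sub_cancel]
  rw [integral_rpow (Or.inl (by linarith))]
  rw [Real.zero_rpow (by intro hcon; linarith [hcon] : -α + 1 ≠ 0)]
  have : -α + 1 = 1 - α := by ring
  rw [this]; ring

theorem S_ball_image_pointwise_relatively_compact
    {X Y : Type*} [NormedAddCommGroup X] [NormedSpace ℝ X] [CompleteSpace X]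
    [NormedAddCommGroup Y] [NormedSpace ℝ Y] [CompleteSpace Y]
    (U : ℝ → ℝ → X →L[ℝ] X) (V : ℝ → ℝ → X →L[ℝ] Y) (J : Y →L[ℝ] X)
    (N c δ α : ℝ) (hN : 1 ≤ N) (hc : 0 < c) (hδ : 0 < δ) (hα0 : 0 < α) (hα1 : α < 1)
    -- `U` is an evolution family on `X`
    (hUid : ∀ t : ℝ, U t t = ContinuousLinearMap.id ℝ X)
    (hUcomp : ∀ t s r : ℝ, r ≤ s → s ≤ t → (U t s).comp (U s r) = U t r)
    (hUcont : ∀ x : X, ContinuousOn (fun p : ℝ × ℝ => U p.1 p.2 x) {p : ℝ × ℝ | p.2 ≤ p.1})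
    -- exponential stability of `U` and the `Y`-smoothing estimate: `J : Y ↪ X` is a continuous
    -- embedding and `V t s` is `U t s` viewed as an operator from `X` to `Y` (for `s < t`)
    (hstab : ∀ t s : ℝ, s ≤ t → ‖U t s‖ ≤ N * Real.exp (-δ * (t - s)))
    (hJinj : Function.Injective J)
    (hJV : ∀ t s : ℝ, s < t → ∀ x : X, J (V t s x) = U t s x)
    (hV : ∀ t s : ℝ, s < t → ∀ x : X,
      ‖V t s x‖ ≤ c * Real.exp (-(δ / 2) * (t - s)) * (t - s) ^ (-α) * ‖x‖)
    -- compactness of `U t s : X → Y` for `t > s`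
    (hVcomp : ∀ t s : ℝ, s < t → IsCompactOperator fun x : X => V t s x)
    -- the operators `B s`
    (B : ℝ → (BoundedContinuousFunction ℝ Y) →L[ℝ] X) (C₀ : ℝ)
    (hC₀ : ∀ s : ℝ, ‖B s‖ ≤ C₀)
    (hBcont : ∀ u : BoundedContinuousFunction ℝ Y, Continuous fun s : ℝ => B s u)
    -- `f` continuous and bounded on the ball of radius `L`
    (L : ℝ) (hL : 0 < L)
    (f : ℝ → Y → X) (hfcont : Continuous fun p : ℝ × Y => f p.1 p.2)
    (M : ℝ) (hM : ∀ (s : ℝ) (φ : Y), ‖φ‖ ≤ L → ‖f s φ‖ ≤ M) :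
    ∀ t : ℝ, IsCompact (closure
      {y : Y | ∃ u : BoundedContinuousFunction ℝ Y, ‖u‖ ≤ L ∧
        y = ∫ s in Set.Iio t, V t s (B s u + f s (u s))}) := by
  intro t
  -- basic constants
  have hM0 : 0 ≤ M := le_trans (norm_nonneg _) (hM 0 0 (by simp; linarith))
  have hC₀0 : 0 ≤ C₀ := le_trans (norm_nonneg _) (hC₀ 0)
  set C : ℝ := C₀ * L + M with hCdef
  have hC0 : 0 ≤ C := by positivity
  -- key factorization through an intermediate time
  have hfact : ∀ (m s : ℝ), s < m → m < t → ∀ x : X, V t s x = V t m (U m s x) := by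
    intro m s hsm hmt x
    apply hJinj
    rw [hJV t s (hsm.trans hmt), hJV t m hmt, ← ContinuousLinearMap.comp_apply,
      hUcomp t m s hsm.le hmt.le]
  -- continuity of s ↦ U m s (g s) on Iic m
  have hUcontg : ∀ (m : ℝ) (g : ℝ → X), Continuous g →
      ContinuousOn (fun s => U m s (g s)) (Set.Iic m) := by
    intro m g hg s₀ hs₀
    have h1 : Tendsto (fun s => U m s (g s - g s₀)) (nhdsWithin s₀ (Set.Iic m)) (nhds 0) := by
      apply squeeze_zero_norm' (a := fun s => N * ‖g s - g s₀‖)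
      · filter_upwards [self_mem_nhdsWithin] with s hs
        calc ‖U m s (g s - g s₀)‖ ≤ ‖U m s‖ * ‖g s - g s₀‖ := (U m s).le_opNorm _
          _ ≤ N * ‖g s - g s₀‖ := by
              refine mul_le_mul_of_nonneg_right ?_ (norm_nonneg _)
              refine le_trans (hstab m s hs) ?_
              have he : Real.exp (-δ * (m - s)) ≤ 1 :=
                Real.exp_le_one_iff.mpr (by nlinarith [Set.mem_Iic.mp hs])
              nlinarith
      · have h2 : Tendsto (fun s => N * ‖g s - g s₀‖) (nhds s₀) (nhds (N * ‖g s₀ - g s₀‖)) :=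
          (((hg.sub continuous_const).norm).tendsto s₀).const_mul N
        simpa using h2.mono_left nhdsWithin_le_nhds
    have h3 : Tendsto (fun s => U m s (g s₀)) (nhdsWithin s₀ (Set.Iic m))
        (nhds (U m s₀ (g s₀))) := by
      have hmap : Set.MapsTo (fun s : ℝ => ((m : ℝ), s)) (Set.Iic m) {p : ℝ × ℝ | p.2 ≤ p.1} :=
        fun s hs => hs
      have hcw : ContinuousWithinAt (fun s : ℝ => ((m : ℝ), s)) (Set.Iic m) s₀ :=
        (continuous_const.prodMk continuous_id).continuousWithinAt
      exact ((hUcont (g s₀)) (m, s₀) hs₀).comp hcw hmap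
    have h4 := h1.add h3
    rw [zero_add] at h4
    exact h4.congr (fun s => by simp [map_sub])
  -- continuity of s ↦ V t s (g s) on Iio t
  have hVcontg : ∀ (g : ℝ → X), Continuous g →
      ContinuousOn (fun s => V t s (g s)) (Set.Iio t) := by
    intro g hg s₀ hs₀
    have hs₀t : s₀ < t := hs₀
    set m := (s₀ + t) / 2 with hm
    have hs₀m : s₀ < m := by rw [hm]; linarith
    have hmt : m < t := by rw [hm]; linarith
    have heq : ∀ s ∈ Set.Iio m, V t s (g s) = V t m (U m s (g s)) :=
      fun s hs => hfact m s hs hmt _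
    have hcont2 : ContinuousOn (fun s => V t m (U m s (g s))) (Set.Iio m) :=
      (V t m).continuous.comp_continuousOn
        ((hUcontg m g hg).mono Set.Iio_subset_Iic_self)
    have hcw : ContinuousWithinAt (fun s => V t s (g s)) (Set.Iio m) s₀ :=
      (hcont2 s₀ hs₀m).congr heq (heq s₀ hs₀m)
    exact (hcw.continuousAt (isOpen_Iio.mem_nhds hs₀m)).continuousWithinAt
  -- integrability of the U-integrand
  have hintU : ∀ (m : ℝ) (g : ℝ → X), Continuous g → (∀ s, ‖g s‖ ≤ C) →
      IntegrableOn (fun s => U m s (g s)) (Set.Iio m) := by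
    intro m g hg hgC
    apply Integrable.mono' ((aux_exp_integrableOn_Iio δ m hδ).const_mul (N * C))
    · exact ((hUcontg m g hg).mono Set.Iio_subset_Iic_self).aestronglyMeasurable
        measurableSet_Iio
    · rw [ae_restrict_iff' measurableSet_Iio]
      filter_upwards with s hs
      calc ‖U m s (g s)‖ ≤ ‖U m s‖ * ‖g s‖ := (U m s).le_opNorm _
        _ ≤ (N * Real.exp (-δ * (m - s))) * C :=
            mul_le_mul (hstab m s (le_of_lt hs)) (hgC s) (norm_nonneg _) (by positivity)
        _ = N * C * Real.exp (-δ * (m - s)) := by ring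
  -- integrability of the V-integrand
  have hintV : ∀ (g : ℝ → X), Continuous g → (∀ s, ‖g s‖ ≤ C) →
      IntegrableOn (fun s => V t s (g s)) (Set.Iio t) := by
    intro g hg hgC
    have hφ : IntegrableOn (fun s => Real.exp (-(δ / 2) * (t - s)) * (t - s) ^ (-α))
        (Set.Iio t) := by
      have hφcont : ContinuousOn (fun s => Real.exp (-(δ / 2) * (t - s)) * (t - s) ^ (-α))
          (Set.Iio t) := by
        apply ContinuousOn.mul
        · exact (by fun_prop : Continuous fun s : ℝ => Real.exp (-(δ / 2) * (t - s))).continuousOn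
        · intro s hs
          have hlt : (s : ℝ) < t := hs
          have : ContinuousAt (fun s : ℝ => (t - s) ^ (-α)) s := by
            apply ContinuousAt.comp (g := fun x : ℝ => x ^ (-α))
            · exact Real.continuousAt_rpow_const _ _ (Or.inl (ne_of_gt (sub_pos.mpr hlt)))
            · exact (continuous_const.sub continuous_id).continuousAt
          exact this.continuousWithinAt
      have h1 : IntegrableOn (fun s => Real.exp (-(δ / 2) * (t - s)) * (t - s) ^ (-α))
          (Set.Iio (t - 1)) := by
        apply Integrable.mono' ((aux_exp_integrableOn_Iio (δ / 2) t (by positivity)).mono_set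
          (Set.Iio_subset_Iio (by linarith)))
        · exact (hφcont.mono (Set.Iio_subset_Iio (by linarith))).aestronglyMeasurable
            measurableSet_Iio
        · rw [ae_restrict_iff' measurableSet_Iio]
          filter_upwards with s hs
          have hs1 : s < t - 1 := hs
          have hbase : (1 : ℝ) ≤ t - s := by linarith
          have hr : (t - s) ^ (-α) ≤ 1 :=
            Real.rpow_le_one_of_one_le_of_nonpos hbase (by linarith)
          have hrpos : 0 ≤ (t - s) ^ (-α) := Real.rpow_nonneg (by linarith) _
          rw [Real.norm_eq_abs, abs_of_nonneg (by positivity)]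
          nlinarith [Real.exp_pos (-(δ / 2) * (t - s))]
      have h2 : IntegrableOn (fun s => Real.exp (-(δ / 2) * (t - s)) * (t - s) ^ (-α))
          (Set.Ico (t - 1) t) := by
        apply Integrable.mono' (aux_rpow_integrableOn_Ico t 1 α hα1 (by norm_num))
        · exact (hφcont.mono (fun x hx => hx.2)).aestronglyMeasurable measurableSet_Ico
        · rw [ae_restrict_iff' measurableSet_Ico]
          filter_upwards with s hs
          have hst : s < t := hs.2
          have he : Real.exp (-(δ / 2) * (t - s)) ≤ 1 :=
            Real.exp_le_one_iff.mpr (by nlinarith)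
          have hrpos : 0 ≤ (t - s) ^ (-α) := Real.rpow_nonneg (by linarith) _
          rw [Real.norm_eq_abs, abs_of_nonneg (by positivity)]
          nlinarith
      have := h1.union h2
      rwa [Set.Iio_union_Ico_eq_Iio (by linarith)] at this
    apply Integrable.mono' (hφ.const_mul (c * C))
    · exact (hVcontg g hg).aestronglyMeasurable measurableSet_Iio
    · rw [ae_restrict_iff' measurableSet_Iio]
      filter_upwards with s hs
      calc ‖V t s (g s)‖ ≤ c * Real.exp (-(δ / 2) * (t - s)) * (t - s) ^ (-α) * ‖g s‖ :=
            hV t s hs _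
        _ = c * (Real.exp (-(δ / 2) * (t - s)) * (t - s) ^ (-α)) * ‖g s‖ := by ring
        _ ≤ c * (Real.exp (-(δ / 2) * (t - s)) * (t - s) ^ (-α)) * C := by
            apply mul_le_mul_of_nonneg_left (hgC s)
            have : (0:ℝ) < t - s := by exact sub_pos.mpr hs
            positivity
        _ = c * C * (Real.exp (-(δ / 2) * (t - s)) * (t - s) ^ (-α)) := by ring
  -- now prove total boundedness
  apply TotallyBounded.isCompact_of_isClosed ?_ isClosed_closure
  apply TotallyBounded.closure
  rw [Metric.totallyBounded_iff]
  intro ε' hε'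
  -- choose ε with small tail
  obtain ⟨ε, hεpos, hεsmall⟩ :
      ∃ ε : ℝ, 0 < ε ∧ c * C * (ε ^ (1 - α) / (1 - α)) < ε' / 4 := by
    have htd : Tendsto (fun e : ℝ => c * C * (e ^ (1 - α) / (1 - α)))
        (nhdsWithin 0 (Set.Ioi 0)) (nhds 0) := by
      have h0 : Tendsto (fun e : ℝ => e ^ (1 - α)) (nhds 0) (nhds 0) := by
        have h := Real.continuousAt_rpow_const 0 (1 - α) (Or.inr (by linarith))
        simpa [ContinuousAt, Real.zero_rpow (show (1 - α) ≠ 0 by linarith)] using h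
      have := ((h0.div_const (1 - α)).const_mul (c * C)).mono_left
        (nhdsWithin_le_nhds (s := Set.Ioi (0:ℝ)))
      simpa using this
    have := (htd.eventually_lt_const (by linarith : (0:ℝ) < ε' / 4)).and self_mem_nhdsWithin
    obtain ⟨e, he1, he2⟩ := this.exists
    exact ⟨e, he2, he1⟩
  set m := t - ε with hmdef
  have hmt : m < t := by rw [hmdef]; linarith
  -- the compact set
  set R : ℝ := ∫ s in Set.Iio m, N * C * Real.exp (-δ * (m - s)) with hRdef
  have hK : IsCompact (closure ((fun x => V t m x) '' Metric.closedBall 0 R)) :=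
    (hVcomp t m hmt).isCompact_closure_image_of_isVonNBounded
      (NormedSpace.isVonNBounded_closedBall ℝ X R)
  obtain ⟨F, hFfin, hFcover⟩ :=
    Metric.totallyBounded_iff.mp hK.totallyBounded (ε' / 2) (by linarith)
  refine ⟨F, hFfin, ?_⟩
  rintro y ⟨u, hu, rfl⟩
  -- properties of the integrand for this u
  set g : ℝ → X := fun s => B s u + f s (u s) with hgdef
  have hgcont : Continuous g := by
    apply (hBcont u).add
    exact hfcont.comp (continuous_id.prodMk u.continuous)
  have hgC : ∀ s, ‖g s‖ ≤ C := by
    intro s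
    calc ‖B s u + f s (u s)‖ ≤ ‖B s u‖ + ‖f s (u s)‖ := norm_add_le _ _
      _ ≤ C₀ * L + M := by
          apply add_le_add
          · exact le_trans ((B s).le_opNorm u)
              (mul_le_mul (hC₀ s) hu (norm_nonneg _) hC₀0)
          · exact hM s (u s) (le_trans (u.norm_coe_le_norm s) hu)
  -- split the integral
  have hIV : IntegrableOn (fun s => V t s (g s)) (Set.Iio t) := hintV g hgcont hgC
  have hdisj : Disjoint (Set.Iio m) (Set.Ico m t) := by
    rw [Set.disjoint_left]
    intro a ha ha2
    exact absurd ha2.1 (not_le.mpr ha)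
  have hsplit : (∫ s in Set.Iio t, V t s (g s))
      = (∫ s in Set.Iio m, V t s (g s)) + ∫ s in Set.Ico m t, V t s (g s) := by
    rw [← setIntegral_union hdisj measurableSet_Ico
      (hIV.mono_set (Set.Iio_subset_Iio hmt.le))
      (hIV.mono_set (fun x hx => hx.2)),
      Set.Iio_union_Ico_eq_Iio hmt.le]
  -- first piece factorizes
  have hIU : IntegrableOn (fun s => U m s (g s)) (Set.Iio m) := hintU m g hgcont hgC
  have h1eq : (∫ s in Set.Iio m, V t s (g s))
      = V t m (∫ s in Set.Iio m, U m s (g s)) := by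
    rw [setIntegral_congr_fun measurableSet_Iio
      (fun s hs => hfact m s hs hmt (g s))]
    exact ContinuousLinearMap.integral_comp_comm _ hIU
  -- the inner integral is in the closed ball of radius R
  have hwR : ‖∫ s in Set.Iio m, U m s (g s)‖ ≤ R := by
    calc ‖∫ s in Set.Iio m, U m s (g s)‖ ≤ ∫ s in Set.Iio m, ‖U m s (g s)‖ :=
          norm_integral_le_integral_norm _
      _ ≤ ∫ s in Set.Iio m, N * C * Real.exp (-δ * (m - s)) := by
          apply setIntegral_mono_on hIU.norm
            ((aux_exp_integrableOn_Iio δ m hδ).const_mul (N * C)) measurableSet_Iio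
          intro s hs
          calc ‖U m s (g s)‖ ≤ ‖U m s‖ * ‖g s‖ := (U m s).le_opNorm _
            _ ≤ (N * Real.exp (-δ * (m - s))) * C :=
                mul_le_mul (hstab m s (le_of_lt hs)) (hgC s) (norm_nonneg _) (by positivity)
            _ = N * C * Real.exp (-δ * (m - s)) := by ring
      _ = R := rfl
  -- tail bound
  have htail : ‖∫ s in Set.Ico m t, V t s (g s)‖ ≤ c * C * (ε ^ (1 - α) / (1 - α)) := by
    calc ‖∫ s in Set.Ico m t, V t s (g s)‖ ≤ ∫ s in Set.Ico m t, ‖V t s (g s)‖ :=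
          norm_integral_le_integral_norm _
      _ ≤ ∫ s in Set.Ico m t, c * C * (t - s) ^ (-α) := by
          apply setIntegral_mono_on (hIV.mono_set (fun x hx => hx.2)).norm
            ((aux_rpow_integrableOn_Ico t ε α hα1 hεpos.le).const_mul (c * C))
            measurableSet_Ico
          intro s hs
          have hst : s < t := hs.2
          have he : Real.exp (-(δ / 2) * (t - s)) ≤ 1 :=
            Real.exp_le_one_iff.mpr (by nlinarith)
          have hrpos : 0 ≤ (t - s) ^ (-α) := Real.rpow_nonneg (by linarith) _
          calc ‖V t s (g s)‖ ≤ c * Real.exp (-(δ / 2) * (t - s)) * (t - s) ^ (-α) * ‖g s‖ :=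
                hV t s hst _
            _ ≤ c * 1 * (t - s) ^ (-α) * C := by
                apply mul_le_mul ?_ (hgC s) (norm_nonneg _) (by positivity)
                apply mul_le_mul_of_nonneg_right ?_ hrpos
                exact mul_le_mul_of_nonneg_left he hc.le
            _ = c * C * (t - s) ^ (-α) := by ring
      _ = c * C * (ε ^ (1 - α) / (1 - α)) := by
          rw [integral_const_mul, hmdef, aux_rpow_integral t ε α hα1 hεpos.le]
  -- assemble
  set w : X := ∫ s in Set.Iio m, U m s (g s) with hwdef
  have hkK : V t m w ∈ closure ((fun x => V t m x) '' Metric.closedBall 0 R) :=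
    subset_closure ⟨w, by simpa using hwR, rfl⟩
  obtain ⟨z, hzF, hkz⟩ := Set.mem_iUnion₂.mp (hFcover hkK)
  apply Set.mem_iUnion₂.mpr
  refine ⟨z, hzF, ?_⟩
  rw [Metric.mem_ball]
  have hdist1 : dist (∫ s in Set.Iio t, V t s (g s)) (V t m w) ≤ c * C * (ε ^ (1 - α) / (1 - α)) := by
    rw [dist_eq_norm, hsplit, h1eq]
    simpa using htail
  calc dist (∫ s in Set.Iio t, V t s (g s)) z
      ≤ dist (∫ s in Set.Iio t, V t s (g s)) (V t m w) + dist (V t m w) z := dist_triangle _ _ _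
    _ < ε' / 4 + ε' / 2 := by
        apply add_lt_add_of_le_of_lt (le_trans hdist1 hεsmall.le) (Metric.mem_ball.mp hkz)
    _ < ε' := by linarith
end
end

section
/- Let X be a Banach space and Y a Banach space continuously embedded in X. Let ρ : (0,∞) → (0,∞) be integrable and for each t > 0 let C(t) : Y → X be a linear map with ‖C(t)y‖_X ≤ ρ(t) ‖y‖_Y for all y ∈ Y, with t ↦ C(t)y continuous on (0,∞) for each y ∈ Y. If φ ∈ AA(Y), then the function t ↦ ∫_{−∞}^{t} C(t−s)φ(s) ds belongs to AA(X). -/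
open MeasureTheory Filter Topology Bornology

noncomputable section

/-- Almost automorphic functions are bounded. -/
theorem AlmostAutomorphicFn.bounded {Z : Type*} [NormedAddCommGroup Z] {f : ℝ → Z}
    (hf : AlmostAutomorphicFn f) : ∃ M : ℝ, 0 ≤ M ∧ ∀ t, ‖f t‖ ≤ M := by
  by_contra h
  push_neg at h
  have hex : ∀ n : ℕ, ∃ t : ℝ, (n : ℝ) < ‖f t‖ := fun n => h n (Nat.cast_nonneg n)
  choose s' hs' using hex
  obtain ⟨k, hk, g, hg1, _⟩ := hf.2 s'
  have h1 : Tendsto (fun n => ‖f ((0 : ℝ) + s' (k n))‖) atTop (𝓝 ‖g 0‖) := (hg1 0).norm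
  obtain ⟨b, hb⟩ := h1.bddAbove_range
  obtain ⟨n, hn⟩ := exists_nat_gt b
  have h2 : ‖f ((0 : ℝ) + s' (k n))‖ ≤ b := hb ⟨n, rfl⟩
  have h3 : ((k n : ℕ) : ℝ) < ‖f (s' (k n))‖ := hs' (k n)
  have h4 : (n : ℝ) ≤ (k n : ℝ) := by exact_mod_cast hk.le_apply
  rw [zero_add] at h2
  linarith

section Aux

variable {X Y : Type*} [NormedAddCommGroup X] [NormedSpace ℝ X] [CompleteSpace X]
  [NormedAddCommGroup Y] [NormedSpace ℝ Y] [CompleteSpace Y]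

/-- Strong measurability of `r ↦ C r (w r)` on `(0,∞)` for continuous `w`, when `C` is only
strongly continuous. -/
theorem meas_aux (C : ℝ → Y →L[ℝ] X)
    (hCcont : ∀ y : Y, ContinuousOn (fun t : ℝ => C t y) (Set.Ioi (0 : ℝ)))
    (w : ℝ → Y) (hw : Continuous w) :
    AEStronglyMeasurable (fun r => C r (w r)) (volume.restrict (Set.Ioi (0 : ℝ))) := by
  have hmeas : ∀ n : ℕ, AEStronglyMeasurable
      (fun r : ℝ => C r (w ((⌈r * (n + 1)⌉₊ : ℝ) / (n + 1))))
      (volume.restrict (Set.Ioi (0 : ℝ))) := by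
    intro n
    have hnp : (0 : ℝ) < (n : ℝ) + 1 := by positivity
    have hsub : Set.Ioi (0 : ℝ) ⊆
        ⋃ j : ℕ, Set.Ioc ((j : ℝ) / (n + 1)) (((j : ℝ) + 1) / (n + 1)) := by
      intro r hr
      have hr' : (0 : ℝ) < r := hr
      have hx : (0 : ℝ) ≤ r * (n + 1) := by positivity
      refine Set.mem_iUnion.mpr ⟨⌈r * (n + 1)⌉₊ - 1, ?_⟩
      have hne : ⌈r * (n + 1)⌉₊ ≠ 0 := (Nat.ceil_pos.mpr (by positivity)).ne'
      have h1 : ((⌈r * (n + 1)⌉₊ : ℝ)) < r * (n + 1) + 1 := Nat.ceil_lt_add_one hx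
      have h2 : r * (n + 1) ≤ (⌈r * (n + 1)⌉₊ : ℝ) := Nat.le_ceil _
      have hcast : ((⌈r * (n + 1)⌉₊ - 1 : ℕ) : ℝ) = (⌈r * (n + 1)⌉₊ : ℝ) - 1 := by
        have := Nat.one_le_iff_ne_zero.mpr hne
        push_cast [Nat.cast_sub this]
        ring
      constructor
      · rw [hcast, div_lt_iff₀ hnp]
        linarith
      · rw [hcast, le_div_iff₀ hnp]
        linarith
    refine AEStronglyMeasurable.mono_measure ?_ (Measure.restrict_mono hsub le_rfl)
    rw [aestronglyMeasurable_iUnion_iff]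
    intro j
    have hset : MeasurableSet (Set.Ioc ((j : ℝ) / (n + 1)) (((j : ℝ) + 1) / (n + 1))) :=
      measurableSet_Ioc
    have hnp : (0 : ℝ) < (n : ℝ) + 1 := by positivity
    have hsub2 : Set.Ioc ((j : ℝ) / (n + 1)) (((j : ℝ) + 1) / (n + 1)) ⊆ Set.Ioi (0 : ℝ) := by
      intro r hr
      have : (0 : ℝ) ≤ (j : ℝ) / (n + 1) := by positivity
      exact lt_of_le_of_lt this hr.1
    have hcont : ContinuousOn (fun r : ℝ => C r (w (((j : ℝ) + 1) / (n + 1))))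
        (Set.Ioc ((j : ℝ) / (n + 1)) (((j : ℝ) + 1) / (n + 1))) :=
      (hCcont _).mono hsub2
    refine (hcont.aestronglyMeasurable hset).congr ?_
    filter_upwards [ae_restrict_mem hset] with r hr
    have hceil : (⌈r * (n + 1)⌉₊ : ℕ) = j + 1 := by
      rw [Nat.ceil_eq_iff (Nat.succ_ne_zero j)]
      constructor
      · push_cast
        have := (div_lt_iff₀ hnp).mp hr.1
        linarith
      · push_cast
        have := (le_div_iff₀ hnp).mp hr.2
        linarith
    rw [hceil]
    push_cast
    rfl
  refine aestronglyMeasurable_of_tendsto_ae atTop hmeas ?_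
  filter_upwards [ae_restrict_mem measurableSet_Ioi] with r hr
  have h1 : Tendsto (fun n : ℕ => ((⌈r * (n + 1)⌉₊ : ℝ) / (n + 1))) atTop (𝓝 r) := by
    have key : Tendsto (fun n : ℕ => ((⌈r * (n + 1)⌉₊ : ℝ) / (n + 1)) - r) atTop (𝓝 0) := by
      refine squeeze_zero_norm (fun n => ?_) tendsto_one_div_add_atTop_nhds_zero_nat
      have hr' : (0 : ℝ) < r := hr
      have hx : (0 : ℝ) ≤ r * ((n : ℝ) + 1) := by positivity
      have h2 := Nat.le_ceil (r * ((n : ℝ) + 1))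
      have h1 := Nat.ceil_lt_add_one hx
      have hnp : (0 : ℝ) < (n : ℝ) + 1 := by positivity
      have hv : (⌈r * ((n : ℝ) + 1)⌉₊ : ℝ) / ((n : ℝ) + 1) - r
          = ((⌈r * ((n : ℝ) + 1)⌉₊ : ℝ) - r * ((n : ℝ) + 1)) / ((n : ℝ) + 1) := by
        field_simp
      rw [Real.norm_eq_abs, hv, abs_div, abs_of_pos hnp, abs_of_nonneg (by linarith)]
      gcongr
      linarith
    have := key.add_const r
    simpa using this
  exact ((C r).continuous.tendsto _).comp ((hw.tendsto r).comp h1)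

/-- Dominated convergence for the convolution kernel. -/
theorem dct_aux (ρ : ℝ → ℝ) (hρpos : ∀ t : ℝ, 0 < t → 0 < ρ t)
    (hρint : IntegrableOn ρ (Set.Ioi (0 : ℝ)))
    (C : ℝ → Y →L[ℝ] X)
    (hC : ∀ t : ℝ, 0 < t → ∀ y : Y, ‖C t y‖ ≤ ρ t * ‖y‖)
    (M : ℝ) (F : ℕ → ℝ → Y) (G : ℝ → Y)
    (hFm : ∀ n, AEStronglyMeasurable (fun r => C r (F n r)) (volume.restrict (Set.Ioi (0 : ℝ))))
    (hFb : ∀ n r, ‖F n r‖ ≤ M)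
    (hlim : ∀ r, Tendsto (fun n => F n r) atTop (𝓝 (G r))) :
    Tendsto (fun n => ∫ r in Set.Ioi (0 : ℝ), C r (F n r)) atTop
      (𝓝 (∫ r in Set.Ioi (0 : ℝ), C r (G r))) := by
  refine tendsto_integral_of_dominated_convergence (fun r => ρ r * M) hFm
    (hρint.mul_const M) (fun n => ?_) (ae_of_all _ fun r => ?_)
  · filter_upwards [ae_restrict_mem measurableSet_Ioi] with r hr
    calc ‖C r (F n r)‖ ≤ ρ r * ‖F n r‖ := hC r hr _
      _ ≤ ρ r * M := mul_le_mul_of_nonneg_left (hFb n r) (hρpos r hr).le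
  · exact ((C r).continuous.tendsto _).comp (hlim r)

end Aux

theorem convolution_kernel_preserves_AA
    {X Y : Type*} [NormedAddCommGroup X] [NormedSpace ℝ X] [CompleteSpace X]
    [NormedAddCommGroup Y] [NormedSpace ℝ Y] [CompleteSpace Y]
    -- `Y` is continuously embedded in `X` via `J`
    (J : Y →L[ℝ] X) (hJinj : Function.Injective J)
    -- the kernel `C` with `‖C t y‖ ≤ ρ t * ‖y‖` for `t > 0`, `ρ` integrable
    (ρ : ℝ → ℝ) (hρpos : ∀ t : ℝ, 0 < t → 0 < ρ t)
    (hρint : IntegrableOn ρ (Set.Ioi (0 : ℝ)))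
    (C : ℝ → Y →L[ℝ] X)
    (hC : ∀ t : ℝ, 0 < t → ∀ y : Y, ‖C t y‖ ≤ ρ t * ‖y‖)
    (hCcont : ∀ y : Y, ContinuousOn (fun t : ℝ => C t y) (Set.Ioi (0 : ℝ)))
    -- `φ ∈ AA(Y)` (hence bounded)
    (φ : ℝ → Y) (hφ : AlmostAutomorphicFn φ) :
    AlmostAutomorphicFn (fun t : ℝ => ∫ s in Set.Iio t, C (t - s) (φ s)) := by
  obtain ⟨M, hM0, hM⟩ := hφ.bounded
  have hφc : Continuous φ := hφ.1
  have hrepr : (fun t : ℝ => ∫ s in Set.Iio t, C (t - s) (φ s))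
      = fun t : ℝ => ∫ r in Set.Ioi (0 : ℝ), C r (φ (t - r)) := by
    funext t
    have hmp : MeasurePreserving (fun s : ℝ => t - s) volume volume :=
      Measure.measurePreserving_sub_left volume t
    have hemb : MeasurableEmbedding (fun s : ℝ => t - s) :=
      (MeasurableEquiv.subLeft t).measurableEmbedding
    have himg : (fun s : ℝ => t - s) '' Set.Ioi 0 = Set.Iio t := by
      rw [Set.image_const_sub_Ioi]; simp
    calc (∫ s in Set.Iio t, C (t - s) (φ s))
        = ∫ r in Set.Ioi (0 : ℝ), C (t - (t - r)) (φ (t - r)) := by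
          rw [← himg, hmp.setIntegral_image_emb hemb]
      _ = ∫ r in Set.Ioi (0 : ℝ), C r (φ (t - r)) := by
          refine setIntegral_congr_fun measurableSet_Ioi fun r _ => ?_
          rw [sub_sub_cancel]
  rw [hrepr]
  have hmφ : ∀ τ : ℝ, AEStronglyMeasurable (fun r => C r (φ (τ - r)))
      (volume.restrict (Set.Ioi (0 : ℝ))) := fun τ =>
    meas_aux C hCcont _ (hφc.comp (continuous_const.sub continuous_id))
  constructor
  · refine SeqContinuous.continuous fun x a hx => ?_
    exact dct_aux ρ hρpos hρint C hC M (fun n r => φ (x n - r)) (fun r => φ (a - r))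
      (fun n => hmφ _) (fun n r => hM _)
      (fun r => (hφc.tendsto _).comp (hx.sub_const r))
  · intro s'
    obtain ⟨k, hk, g, hg1, hg2⟩ := hφ.2 s'
    have hgM : ∀ t, ‖g t‖ ≤ M := fun t =>
      le_of_tendsto (hg1 t).norm (Eventually.of_forall fun n => hM _)
    have hmg : ∀ τ : ℝ, AEStronglyMeasurable (fun r => C r (g (τ - r)))
        (volume.restrict (Set.Ioi (0 : ℝ))) := by
      intro τ
      refine aestronglyMeasurable_of_tendsto_ae atTop (f := fun n r => C r (φ (τ + s' (k n) - r)))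
        (fun n => hmφ _) (ae_of_all _ fun r => ?_)
      have h0 : Tendsto (fun n => φ ((τ - r) + s' (k n))) atTop (𝓝 (g (τ - r))) := hg1 _
      have h0' : Tendsto (fun n => φ (τ + s' (k n) - r)) atTop (𝓝 (g (τ - r))) :=
        h0.congr fun n => by rw [show (τ - r) + s' (k n) = τ + s' (k n) - r from by ring]
      exact ((C r).continuous.tendsto _).comp h0'
    refine ⟨k, hk, fun t => ∫ r in Set.Ioi (0 : ℝ), C r (g (t - r)), fun t => ?_, fun t => ?_⟩
    · exact dct_aux ρ hρpos hρint C hC M (fun n r => φ (t + s' (k n) - r)) (fun r => g (t - r))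
        (fun n => hmφ _) (fun n r => hM _)
        (fun r => (hg1 (t - r)).congr fun n => by
          rw [show (t - r) + s' (k n) = t + s' (k n) - r from by ring])
    · exact dct_aux ρ hρpos hρint C hC M (fun n r => g (t - s' (k n) - r)) (fun r => φ (t - r))
        (fun n => hmg _) (fun n r => hgM _)
        (fun r => (hg2 (t - r)).congr fun n => by
          rw [show (t - r) - s' (k n) = t - s' (k n) - r from by ring])
end
end

section
/- Let X be a Banach space and Y a Banach space continuously embedded in X. Let ρ : (0,∞) → (0,∞) be integrable and for each t > 0 let C(t) : Y → X be a linear map with ‖C(t)y‖_X ≤ ρ(t) ‖y‖_Y for all y ∈ Y, with t ↦ C(t)y continuous on (0,∞) for each y ∈ Y. If φ ∈ PAP₀(Y), then the function t ↦ ∫_{−∞}^{t} C(t−s)φ(s) ds belongs to PAP₀(X). -/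
open MeasureTheory Filter Topology Bornology

noncomputable section

/-- `PAPZeroFn f` : `f` is bounded continuous and `(1/(2r)) ∫_{-r}^r ‖f s‖ ds → 0` as `r → ∞`. -/
def PAPZeroFn {Z : Type*} [NormedAddCommGroup Z] (f : ℝ → Z) : Prop :=
  Continuous f ∧ (∃ M : ℝ, ∀ t : ℝ, ‖f t‖ ≤ M) ∧
  Tendsto (fun r : ℝ => (1 / (2 * r)) * ∫ s in (-r)..r, ‖f s‖) atTop (𝓝 0)

/-!
Substituting `u = t - s` writes the convolution as `F t = ∫_{u>0} C u (φ (t - u)) du`, so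
`‖F t‖ ≤ ∫_{u>0} ρ u ‖φ (t - u)‖ du`. By Fubini, the mean of the right-hand side over `[-r, r]`
is `∫_{u>0} ρ u · (mean of ‖φ (· - u)‖ over [-r, r]) du`; each inner mean tends to `0`, since
translation by `u` changes the window by a bounded amount, and is bounded by `sup ‖φ‖`, so
dominated convergence (with dominating function `ρ · sup ‖φ‖`) finishes. Measurability of
`u ↦ C u (φ (t - u))` comes from Banach–Steinhaus: a strongly continuous family of
operators on a Banach space is uniformly bounded on compact sets, hence jointly continuous.
-/

section StrongContinuity

variable {T X Y : Type*} [TopologicalSpace T] [NormedAddCommGroup X] [NormedSpace ℝ X]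
  [NormedAddCommGroup Y] [NormedSpace ℝ Y] [CompleteSpace Y]

theorem continuousOn_uncurry_apply_of_isCompact {C : T → Y →L[ℝ] X} {K : Set T} (hK : IsCompact K)
    (hC : ∀ y, ContinuousOn (fun t => C t y) K) :
    ContinuousOn (fun p : T × Y => C p.1 p.2) (K ×ˢ Set.univ) := by
  obtain ⟨B, hB⟩ : ∃ B, ∀ t : K, ‖C t‖ ≤ B :=
    banach_steinhaus fun y => (hK.exists_bound_of_continuousOn (hC y)).imp
      fun _ h t => h t t.2
  refine continuousOn_prod_of_continuousOn_lipschitzOnWith' _ (Real.toNNReal B)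
    (fun t ht => ?_) (fun y _ => hC y)
  exact ((C t).lipschitz.weaken ((hB ⟨t, ht⟩).trans (Real.le_coe_toNNReal B))).lipschitzOnWith

theorem continuousOn_apply_of_strongly_continuousOn [LocallyCompactSpace T] {C : T → Y →L[ℝ] X}
    {U : Set T} (hU : IsOpen U) (hC : ∀ y, ContinuousOn (fun t => C t y) U) {g : T → Y}
    (hg : ContinuousOn g U) : ContinuousOn (fun t => C t (g t)) U := by
  intro x hx
  obtain ⟨K, hK, hxK, hKU⟩ := exists_compact_subset hU hx
  have hjoint := continuousOn_uncurry_apply_of_isCompact hK fun y => (hC y).mono hKU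
  have : ContinuousOn (fun t => C t (g t)) K :=
    hjoint.comp ((continuousOn_id.prodMk (hg.mono hKU))) fun t ht => ⟨ht, Set.mem_univ _⟩
  exact (this.continuousAt (mem_interior_iff_mem_nhds.1 hxK)).continuousWithinAt

end StrongContinuity

/-- The third clause of `PAPZeroFn f` is `Tendsto (symmAverage (‖f ·‖)) atTop (𝓝 0)`. -/
def symmAverage (f : ℝ → ℝ) (r : ℝ) : ℝ := (1 / (2 * r)) * ∫ s in (-r)..r, f s

namespace symmAverage

theorem nonneg {f : ℝ → ℝ} (hf : ∀ s, 0 ≤ f s) {r : ℝ} (hr : 0 ≤ r) : 0 ≤ symmAverage f r :=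
  mul_nonneg (by positivity) (intervalIntegral.integral_nonneg (by linarith) fun s _ => hf s)

theorem mono {f g : ℝ → ℝ} (hf : Continuous f) (hg : Continuous g) (hfg : ∀ s, f s ≤ g s) {r : ℝ}
    (hr : 0 ≤ r) : symmAverage f r ≤ symmAverage g r :=
  mul_le_mul_of_nonneg_left (intervalIntegral.integral_mono_on (by linarith)
    (hf.intervalIntegrable _ _) (hg.intervalIntegrable _ _) fun s _ => hfg s) (by positivity)

theorem le_of_forall_le {f : ℝ → ℝ} (hf : Continuous f) {M : ℝ} (hM : ∀ s, f s ≤ M) {r : ℝ}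
    (hr : 0 < r) : symmAverage f r ≤ M := by
  calc symmAverage f r ≤ symmAverage (fun _ => M) r := mono hf continuous_const hM hr.le
    _ = M := by
      rw [symmAverage, intervalIntegral.integral_const, smul_eq_mul]
      field_simp
      ring

theorem comp_sub_le {f : ℝ → ℝ} (hf : Continuous f) (hf0 : ∀ s, 0 ≤ f s) (u : ℝ) {r : ℝ}
    (hr : 0 < r) :
    symmAverage (fun s => f (s - u)) r ≤ ((r + |u|) / r) * symmAverage f (r + |u|) := by
  have hru : 0 < r + |u| := by positivity
  have hshift : ∫ s in (-r)..r, f (s - u) ≤ ∫ s in (-(r + |u|))..(r + |u|), f s := by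
    rw [intervalIntegral.integral_comp_sub_right f u]
    exact intervalIntegral.integral_mono_interval (by linarith [le_abs_self u])
      (by linarith) (by linarith [neg_abs_le u]) (.of_forall hf0) (hf.intervalIntegrable _ _)
  calc symmAverage (fun s => f (s - u)) r
      ≤ (1 / (2 * r)) * ∫ s in (-(r + |u|))..(r + |u|), f s :=
        mul_le_mul_of_nonneg_left hshift (by positivity)
    _ = ((r + |u|) / r) * symmAverage f (r + |u|) := by
        rw [symmAverage, ← mul_assoc]
        congr 1
        field_simp

theorem tendsto_comp_sub {f : ℝ → ℝ} (hf : Continuous f) (hf0 : ∀ s, 0 ≤ f s)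
    (h : Tendsto (symmAverage f) atTop (𝓝 0)) (u : ℝ) :
    Tendsto (symmAverage fun s => f (s - u)) atTop (𝓝 0) := by
  have hratio : Tendsto (fun r : ℝ => (r + |u|) / r) atTop (𝓝 1) := by
    have : Tendsto (fun r : ℝ => 1 + |u| / r) atTop (𝓝 (1 + 0)) :=
      tendsto_const_nhds.add (tendsto_const_nhds.div_atTop tendsto_id)
    rw [add_zero] at this
    refine this.congr' ?_
    filter_upwards [eventually_ne_atTop 0] with r hr
    field_simp
  have hupper := hratio.mul (h.comp (tendsto_atTop_add_const_right atTop |u| tendsto_id))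
  rw [mul_zero] at hupper
  refine squeeze_zero' ?_ ?_ hupper
  · filter_upwards [eventually_ge_atTop 0] with r hr
    exact nonneg (fun _ => hf0 _) hr
  · filter_upwards [eventually_gt_atTop 0] with r hr
    exact comp_sub_le hf hf0 u hr

end symmAverage

section ScalarConvolution

variable {μ : Measure ℝ} {ρ ψ : ℝ → ℝ} {M : ℝ}

theorem integrable_mul_comp_sub (hρ : Integrable ρ μ) (hψ : Continuous ψ)
    (hψM : ∀ s, ‖ψ s‖ ≤ M) (t : ℝ) : Integrable (fun u => ρ u * ψ (t - u)) μ :=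
  hρ.mul_bdd (hψ.comp (continuous_const.sub continuous_id)).aestronglyMeasurable
    (.of_forall fun _ => hψM _)

theorem continuous_integral_mul_comp_sub (hρ : Integrable ρ μ) (hψ : Continuous ψ)
    (hψM : ∀ s, ‖ψ s‖ ≤ M) : Continuous fun t => ∫ u, ρ u * ψ (t - u) ∂μ :=
  continuous_of_dominated (fun t => (integrable_mul_comp_sub hρ hψ hψM t).aestronglyMeasurable)
    (fun t => .of_forall fun u => by
      rw [norm_mul]; exact mul_le_mul_of_nonneg_left (hψM _) (norm_nonneg _))
    (hρ.norm.mul_const M) (.of_forall fun _ => by fun_prop)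

theorem symmAverage_integral_mul_comp_sub [SFinite μ] (hρ : Integrable ρ μ) (hψ : Continuous ψ)
    (hψM : ∀ s, ‖ψ s‖ ≤ M) (r : ℝ) :
    symmAverage (fun t => ∫ u, ρ u * ψ (t - u) ∂μ) r
      = ∫ u, ρ u * symmAverage (fun t => ψ (t - u)) r ∂μ := by
  have : IsFiniteMeasure (volume.restrict (Set.uIoc (-r) r)) :=
    Real.isFiniteMeasure_restrict_Ioc _ _
  have hprod : Integrable (Function.uncurry fun t u => ρ u * ψ (t - u))
      ((volume.restrict (Set.uIoc (-r) r)).prod μ) :=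
    ((hρ.norm.comp_snd _).mul_const M).mono'
      (hρ.aestronglyMeasurable.comp_snd.mul
        (hψ.comp (continuous_fst.sub continuous_snd)).aestronglyMeasurable)
      (.of_forall fun p => by
        rw [Function.uncurry_apply_pair, norm_mul]
        exact mul_le_mul_of_nonneg_left (hψM _) (norm_nonneg _))
  rw [symmAverage, intervalIntegral_integral_swap hprod, ← integral_const_mul]
  congr 1 with u
  rw [intervalIntegral.integral_const_mul, symmAverage]
  ring

theorem tendsto_symmAverage_integral_mul_comp_sub [SFinite μ] (hρ : Integrable ρ μ)
    (hψ : Continuous ψ) (hψ0 : ∀ s, 0 ≤ ψ s) (hψM : ∀ s, ψ s ≤ M)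
    (h : Tendsto (symmAverage ψ) atTop (𝓝 0)) :
    Tendsto (symmAverage fun t => ∫ u, ρ u * ψ (t - u) ∂μ) atTop (𝓝 0) := by
  have hψM' : ∀ s, ‖ψ s‖ ≤ M := fun s => by rw [Real.norm_of_nonneg (hψ0 s)]; exact hψM s
  simp_rw [funext (symmAverage_integral_mul_comp_sub hρ hψ hψM')]
  have hcont : ∀ r, Continuous fun u => symmAverage (fun t => ψ (t - u)) r := fun r =>
    continuous_const.mul (intervalIntegral.continuous_parametric_intervalIntegral_of_continuous'
      (f := fun u t => ψ (t - u)) (by fun_prop) _ _)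
  have hdom := tendsto_integral_filter_of_dominated_convergence (μ := μ) (l := atTop)
    (fun u => ‖ρ u‖ * M)
    (.of_forall fun r => hρ.aestronglyMeasurable.mul (hcont r).aestronglyMeasurable) ?_
    (hρ.norm.mul_const M)
    (.of_forall fun u => (symmAverage.tendsto_comp_sub hψ hψ0 h u).const_mul (ρ u))
  · simpa using hdom
  filter_upwards [eventually_gt_atTop 0] with r hr
  refine .of_forall fun u => ?_
  rw [Pi.mul_apply, norm_mul, Real.norm_of_nonneg (symmAverage.nonneg (fun _ => hψ0 _) hr.le)]
  exact mul_le_mul_of_nonneg_left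
    (symmAverage.le_of_forall_le (by fun_prop) (fun _ => hψM _) hr) (norm_nonneg _)

end ScalarConvolution

section Kernel

variable {X Y : Type*} [NormedAddCommGroup X] [NormedSpace ℝ X] [NormedAddCommGroup Y]
  [NormedSpace ℝ Y] {C : ℝ → Y →L[ℝ] X} {ρ : ℝ → ℝ} {φ : ℝ → Y} {M : ℝ}

theorem setIntegral_Iio_eq_setIntegral_Ioi_sub (f : ℝ → X) (t : ℝ) :
    ∫ s in Set.Iio t, f s = ∫ u in Set.Ioi 0, f (t - u) := by
  rw [← (Measure.measurePreserving_sub_left volume t).setIntegral_preimage_emb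
    (Homeomorph.subLeft t).measurableEmbedding]
  congr 2
  ext u
  simp

theorem aestronglyMeasurable_apply_comp_sub [CompleteSpace Y]
    (hCcont : ∀ y, ContinuousOn (fun u => C u y) (Set.Ioi 0)) (hφ : Continuous φ) (t : ℝ) :
    AEStronglyMeasurable (fun u => C u (φ (t - u))) (volume.restrict (Set.Ioi 0)) :=
  (continuousOn_apply_of_strongly_continuousOn isOpen_Ioi hCcont
    (hφ.comp (continuous_const.sub continuous_id)).continuousOn).aestronglyMeasurable
    measurableSet_Ioi

theorem norm_apply_comp_sub_le (hC : ∀ u, 0 < u → ∀ y, ‖C u y‖ ≤ ρ u * ‖y‖)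
    (hφM : ∀ s, ‖φ s‖ ≤ M) (t : ℝ) :
    ∀ᵐ u ∂volume.restrict (Set.Ioi 0), ‖C u (φ (t - u))‖ ≤ ‖ρ u‖ * M :=
  ae_restrict_of_forall_mem measurableSet_Ioi fun u hu =>
    calc ‖C u (φ (t - u))‖ ≤ ρ u * ‖φ (t - u)‖ := hC u hu _
      _ ≤ ‖ρ u‖ * M := mul_le_mul (Real.le_norm_self _) (hφM _) (norm_nonneg _) (norm_nonneg _)

theorem continuous_setIntegral_apply_comp_sub [CompleteSpace Y]
    (hρ : IntegrableOn ρ (Set.Ioi 0)) (hC : ∀ u, 0 < u → ∀ y, ‖C u y‖ ≤ ρ u * ‖y‖)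
    (hCcont : ∀ y, ContinuousOn (fun u => C u y) (Set.Ioi 0)) (hφ : Continuous φ)
    (hφM : ∀ s, ‖φ s‖ ≤ M) : Continuous fun t => ∫ u in Set.Ioi 0, C u (φ (t - u)) :=
  continuous_of_dominated (aestronglyMeasurable_apply_comp_sub hCcont hφ)
    (norm_apply_comp_sub_le hC hφM) (hρ.norm.mul_const M)
    (.of_forall fun u => (C u).continuous.comp (hφ.comp (continuous_id.sub continuous_const)))

end Kernel

theorem convolution_kernel_preserves_PAP0_general
    {X Y : Type*} [NormedAddCommGroup X] [NormedSpace ℝ X]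
    [NormedAddCommGroup Y] [NormedSpace ℝ Y] [CompleteSpace Y]
    -- the kernel `C` with `‖C t y‖ ≤ ρ t * ‖y‖` for `t > 0`, `ρ` integrable
    (ρ : ℝ → ℝ)
    (hρint : IntegrableOn ρ (Set.Ioi (0 : ℝ)))
    (C : ℝ → Y →L[ℝ] X)
    (hC : ∀ t : ℝ, 0 < t → ∀ y : Y, ‖C t y‖ ≤ ρ t * ‖y‖)
    (hCcont : ∀ y : Y, ContinuousOn (fun t : ℝ => C t y) (Set.Ioi (0 : ℝ)))
    -- `φ ∈ PAP₀(Y)`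
    (φ : ℝ → Y) (hφ : PAPZeroFn φ) :
    PAPZeroFn (fun t : ℝ => ∫ s in Set.Iio t, C (t - s) (φ s)) := by
  obtain ⟨hφc, ⟨M, hφM⟩, hφmean⟩ := hφ
  simp_rw [setIntegral_Iio_eq_setIntegral_Ioi_sub (fun s => C (_ - s) (φ s)), sub_sub_cancel]
  have hF := continuous_setIntegral_apply_comp_sub hρint hC hCcont hφc hφM
  have hnormφM : ∀ s, ‖‖φ s‖‖ ≤ M := fun s => (norm_norm _).trans_le (hφM s)
  have hG := continuous_integral_mul_comp_sub hρint hφc.norm hnormφM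
  have hFG : ∀ t, ‖∫ u in Set.Ioi 0, C u (φ (t - u))‖ ≤ ∫ u in Set.Ioi 0, ρ u * ‖φ (t - u)‖ :=
    fun t => norm_integral_le_of_norm_le (integrable_mul_comp_sub hρint hφc.norm hnormφM t)
      (ae_restrict_of_forall_mem measurableSet_Ioi fun u hu => hC u hu _)
  refine ⟨hF, ⟨(∫ u in Set.Ioi 0, ‖ρ u‖) * M, fun t => ?_⟩, ?_⟩
  · rw [← integral_mul_const]
    exact norm_integral_le_of_norm_le (hρint.norm.mul_const M) (norm_apply_comp_sub_le hC hφM t)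
  · have hGmean := tendsto_symmAverage_integral_mul_comp_sub hρint hφc.norm
      (fun _ => norm_nonneg _) hφM hφmean
    refine squeeze_zero' ?_ ?_ hGmean
    all_goals filter_upwards [eventually_ge_atTop 0] with r hr
    · exact symmAverage.nonneg (fun _ => norm_nonneg _) hr
    · exact symmAverage.mono hF.norm hG hFG hr

theorem convolution_kernel_preserves_PAP0
    {X Y : Type*} [NormedAddCommGroup X] [NormedSpace ℝ X] [CompleteSpace X]
    [NormedAddCommGroup Y] [NormedSpace ℝ Y] [CompleteSpace Y]
    -- `Y` is continuously embedded in `X` via `J`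
    (J : Y →L[ℝ] X) (hJinj : Function.Injective J)
    -- the kernel `C` with `‖C t y‖ ≤ ρ t * ‖y‖` for `t > 0`, `ρ` integrable
    (ρ : ℝ → ℝ) (hρpos : ∀ t : ℝ, 0 < t → 0 < ρ t)
    (hρint : IntegrableOn ρ (Set.Ioi (0 : ℝ)))
    (C : ℝ → Y →L[ℝ] X)
    (hC : ∀ t : ℝ, 0 < t → ∀ y : Y, ‖C t y‖ ≤ ρ t * ‖y‖)
    (hCcont : ∀ y : Y, ContinuousOn (fun t : ℝ => C t y) (Set.Ioi (0 : ℝ)))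
    -- `φ ∈ PAP₀(Y)`
    (φ : ℝ → Y) (hφ : PAPZeroFn φ) :
    PAPZeroFn (fun t : ℝ => ∫ s in Set.Iio t, C (t - s) (φ s)) :=
  convolution_kernel_preserves_PAP0_general ρ hρint C hC hCcont φ hφ
end
end

section
/- Let X be a Banach space. The set PAA(X) of pseudo-almost automorphic functions is a closed subspace of the Banach space BC(ℝ,X) of bounded continuous functions with the sup norm; in particular, if (f_n) ⊆ PAA(X) converges uniformly on ℝ to f, then f ∈ PAA(X), and PAA(X) equipped with the sup norm is a Banach space. -/
/-!
The crux is that the almost automorphic part `g` of `f = g + φ` satisfies `‖g t‖ ≤ sup ‖f‖`.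
Since `‖φ‖` has mean zero, one can choose translations `s n` such that `‖φ‖` has mass
`< 1 / (m + 1)` on `[α, β] + (s m - s n)` for all `n < m`. Along a subsequence on which
`g (· + s k) → g'` and `g' (· - s k) → g`, the bound
`∫_α^β ‖g (x + s m - s n)‖ ≤ (β - α) sup ‖f‖ + 1 / (m + 1)` passes by dominated convergence,
first as `m → ∞` and then as `n → ∞`, to `∫_α^β ‖g‖ ≤ (β - α) sup ‖f‖`.
Consequently the almost automorphic parts of a uniformly convergent sequence of pseudo almost
automorphic functions converge uniformly as well, and it remains to see that almost automorphic
functions (by a diagonal subsequence) and ergodic perturbations are closed under uniform limits.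
-/

open MeasureTheory Filter Topology Bornology

noncomputable section

/-- A bounded continuous function is pseudo-almost automorphic if it decomposes as the sum of
an almost automorphic function and an ergodic (`PAPZeroFn`) perturbation. -/
def PseudoAlmostAutomorphicFn {Z : Type*} [NormedAddCommGroup Z] (f : ℝ → Z) : Prop :=
  Continuous f ∧ (∃ M : ℝ, ∀ t : ℝ, ‖f t‖ ≤ M) ∧
  ∃ g φ : ℝ → Z, AlmostAutomorphicFn g ∧ PAPZeroFn φ ∧ ∀ t : ℝ, f t = g t + φ t

open scoped BoundedContinuousFunction

section

variable {Z : Type*} [NormedAddCommGroup Z]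

namespace AlmostAutomorphicFn

theorem zero : AlmostAutomorphicFn (0 : ℝ → Z) :=
  ⟨continuous_const, fun _ => ⟨id, strictMono_id, 0,
    fun _ => tendsto_const_nhds, fun _ => tendsto_const_nhds⟩⟩

theorem add {f g : ℝ → Z} (hf : AlmostAutomorphicFn f) (hg : AlmostAutomorphicFn g) :
    AlmostAutomorphicFn (f + g) := by
  refine ⟨hf.1.add hg.1, fun s => ?_⟩
  obtain ⟨k, hk, f', hf₁, hf₂⟩ := hf.2 s
  obtain ⟨k', hk', g', hg₁, hg₂⟩ := hg.2 (s ∘ k)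
  exact ⟨k ∘ k', hk.comp hk', f' + g',
    fun t => ((hf₁ t).comp hk'.tendsto_atTop).add (hg₁ t),
    fun t => ((hf₂ t).comp hk'.tendsto_atTop).add (hg₂ t)⟩

theorem neg {f : ℝ → Z} (hf : AlmostAutomorphicFn f) : AlmostAutomorphicFn (-f) := by
  refine ⟨hf.1.neg, fun s => ?_⟩
  obtain ⟨k, hk, f', hf₁, hf₂⟩ := hf.2 s
  exact ⟨k, hk, -f', fun t => (hf₁ t).neg, fun t => (hf₂ t).neg⟩

theorem sub {f g : ℝ → Z} (hf : AlmostAutomorphicFn f) (hg : AlmostAutomorphicFn g) :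
    AlmostAutomorphicFn (f - g) := by
  simpa only [sub_eq_add_neg] using hf.add hg.neg

theorem const_smul {M : Type*} [SMul M Z] [ContinuousConstSMul M Z] (c : M) {f : ℝ → Z}
    (hf : AlmostAutomorphicFn f) : AlmostAutomorphicFn (c • f) := by
  refine ⟨hf.1.const_smul c, fun s => ?_⟩
  obtain ⟨k, hk, f', hf₁, hf₂⟩ := hf.2 s
  exact ⟨k, hk, c • f', fun t => (hf₁ t).const_smul c, fun t => (hf₂ t).const_smul c⟩

theorem exists_norm_le_s15 {f : ℝ → Z} (hf : AlmostAutomorphicFn f) : ∃ C, ∀ t, ‖f t‖ ≤ C := by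
  by_contra! h
  choose t ht using fun n : ℕ => h n
  obtain ⟨k, hk, f', hf₁, -⟩ := hf.2 t
  have hunbounded : Tendsto (fun n => ‖f (0 + t (k n))‖) atTop atTop := by
    refine tendsto_atTop_mono (fun n => ?_) tendsto_natCast_atTop_atTop
    rw [zero_add]
    exact (Nat.cast_le.2 (hk.id_le n)).trans (ht (k n)).le
  exact not_tendsto_atTop_of_tendsto_nhds (hf₁ 0).norm hunbounded

end AlmostAutomorphicFn

theorem exists_strictMono_forall_of_antitone {P : ℕ → Filter ℕ → Prop} (hP : ∀ n, Antitone (P n))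
    (h : ∀ n (φ : ℕ → ℕ), ∃ ψ : ℕ → ℕ, StrictMono ψ ∧ P n (map (φ ∘ ψ) atTop)) :
    ∃ φ : ℕ → ℕ, StrictMono φ ∧ ∀ n, P n (map φ atTop) := by
  choose ψ hψ hPψ using h
  let L : ℕ → ℕ → ℕ := fun n => Nat.rec id (fun n Ln => Ln ∘ ψ n Ln) n
  have hLmono : ∀ n, StrictMono (L n) := by
    intro n
    induction n with
    | zero => exact strictMono_id
    | succ n ih => exact ih.comp (hψ _ _)
  have hLsub : ∀ n m, n ≤ m → ∃ e : ℕ → ℕ, StrictMono e ∧ L m = L n ∘ e := by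
    intro n m hnm
    induction m, hnm using Nat.le_induction with
    | base => exact ⟨id, strictMono_id, rfl⟩
    | succ m _ ih =>
      obtain ⟨e, he, hLe⟩ := ih
      exact ⟨e ∘ ψ m (L m), he.comp (hψ _ _), by rw [← Function.comp_assoc, ← hLe]⟩
  -- the diagonal of the nested subsequences `L (n + 1)` is eventually a subsequence of each
  refine ⟨fun j => L (j + 1) j, strictMono_nat_of_lt_succ fun j => ?_,
    fun n => hP n ?_ (hPψ n (L n))⟩
  · exact hLmono (j + 1) ((Nat.lt_succ_self j).trans_le ((hψ _ _).id_le _))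
  · intro S hS
    obtain ⟨N, hN⟩ := mem_atTop_sets.1 (mem_map.1 hS)
    refine mem_map.2 (mem_atTop_sets.2 ⟨max (n + 1) N, fun j hj => ?_⟩)
    obtain ⟨e, he, hLe⟩ := hLsub (n + 1) (j + 1) (by omega)
    rw [Set.mem_preimage, hLe]
    exact hN _ ((le_of_max_le_right hj).trans (he.id_le j))

theorem UniformCauchySeqOn.of_tendsto_comp {ι α β γ : Type*} [UniformSpace β]
    {F : ℕ → α → β} {G : ℕ → γ → β} {l : Filter ι} [l.NeBot]
    (hF : UniformCauchySeqOn F atTop Set.univ) (τ : γ → ι → α)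
    (hFG : ∀ n y, Tendsto (fun j => F n (τ y j)) l (𝓝 (G n y))) :
    UniformCauchySeqOn G atTop Set.univ := by
  intro u hu
  obtain ⟨v, ⟨hv, hvc⟩, hvu⟩ := uniformity_hasBasis_closed.mem_iff.1 hu
  filter_upwards [hF v hv] with p hp y _
  exact hvu (hvc.mem_of_tendsto ((hFG p.1 y).prodMk_nhds (hFG p.2 y))
    (Eventually.of_forall fun j => hp _ (Set.mem_univ _)))

theorem AlmostAutomorphicFn.of_tendstoUniformly [CompleteSpace Z] {g : ℕ → ℝ → Z} {G : ℝ → Z}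
    (hg : ∀ n, AlmostAutomorphicFn (g n)) (hgG : TendstoUniformly g G atTop) :
    AlmostAutomorphicFn G := by
  refine ⟨hgG.continuous (Frequently.of_forall fun n => (hg n).1), fun s => ?_⟩
  obtain ⟨k, hk, hlim⟩ := exists_strictMono_forall_of_antitone
    (P := fun n l => ∃ g' : ℝ → Z, (∀ t, Tendsto (fun i => g n (t + s i)) l (𝓝 (g' t))) ∧
      ∀ t, Tendsto (fun i => g' (t - s i)) l (𝓝 (g n t)))
    (fun n _ _ hl ⟨g', h₁, h₂⟩ => ⟨g', fun t => (h₁ t).mono_left hl, fun t => (h₂ t).mono_left hl⟩)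
    (fun n φ => by
      obtain ⟨ψ, hψ, g', h₁, h₂⟩ := (hg n).2 (s ∘ φ)
      exact ⟨ψ, hψ, g', fun t => tendsto_map'_iff.2 (h₁ t), fun t => tendsto_map'_iff.2 (h₂ t)⟩)
  choose g' hg'₁ hg'₂ using hlim
  have hcauchy : UniformCauchySeqOn g' atTop Set.univ :=
    hgG.tendstoUniformlyOn.uniformCauchySeqOn.of_tendsto_comp (fun t i => t + s i) hg'₁
  choose G' hG' using fun t => cauchySeq_tendsto_of_complete (hcauchy.cauchySeq (Set.mem_univ t))
  have hg'G' : TendstoUniformly g' G' atTop :=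
    tendstoUniformlyOn_univ.1 (hcauchy.tendstoUniformlyOn_of_tendsto fun t _ => hG' t)
  refine ⟨k, hk, G', fun t => tendsto_map'_iff.1 ?_, fun t => tendsto_map'_iff.1 ?_⟩
  · exact (hgG.comp fun i => t + s i).tendsto_of_eventually_tendsto
      (Eventually.of_forall fun n => hg'₁ n t) (hG' t)
  · exact (hg'G'.comp fun i => t - s i).tendsto_of_eventually_tendsto
      (Eventually.of_forall fun n => hg'₂ n t) (hgG.tendsto_at t)

theorem isClosed_setOf_almostAutomorphicFn [CompleteSpace Z] :
    IsClosed {g : ℝ →ᵇ Z | AlmostAutomorphicFn g} :=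
  IsSeqClosed.isClosed fun _ _ hg hgG => AlmostAutomorphicFn.of_tendstoUniformly hg
    (BoundedContinuousFunction.tendsto_iff_tendstoUniformly.1 hgG)

theorem intervalIntegral_le_mul_add {u v : ℝ → ℝ} (hu : Continuous u) (hv : Continuous v)
    {α β M : ℝ} (hαβ : α ≤ β) (huv : ∀ x, u x ≤ M + v x) :
    ∫ x in α..β, u x ≤ (β - α) * M + ∫ x in α..β, v x :=
  calc ∫ x in α..β, u x ≤ ∫ x in α..β, (M + v x) :=
        intervalIntegral.integral_mono_on hαβ (hu.intervalIntegrable _ _)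
          ((continuous_const.add hv).intervalIntegrable _ _) fun x _ => huv x
    _ = (β - α) * M + ∫ x in α..β, v x := by
        rw [intervalIntegral.integral_add intervalIntegrable_const (hv.intervalIntegrable _ _),
          intervalIntegral.integral_const, smul_eq_mul]

def symmetricMean (u : ℝ → ℝ) (r : ℝ) : ℝ := (1 / (2 * r)) * ∫ s in (-r)..r, u s

theorem symmetricMean_nonneg {u : ℝ → ℝ} (hu : 0 ≤ u) {r : ℝ} (hr : 0 ≤ r) :
    0 ≤ symmetricMean u r :=
  mul_nonneg (by positivity) (intervalIntegral.integral_nonneg (by linarith) fun s _ => hu s)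

theorem symmetricMean_add {u v : ℝ → ℝ} (hu : Continuous u) (hv : Continuous v) (r : ℝ) :
    symmetricMean (u + v) r = symmetricMean u r + symmetricMean v r := by
  simp only [symmetricMean, Pi.add_apply,
    intervalIntegral.integral_add (hu.intervalIntegrable _ _) (hv.intervalIntegrable _ _), mul_add]

theorem symmetricMean_const_mul (c : ℝ) (u : ℝ → ℝ) (r : ℝ) :
    symmetricMean (fun s => c * u s) r = c * symmetricMean u r := by
  simp only [symmetricMean, intervalIntegral.integral_const_mul]
  ring

theorem symmetricMean_le_add {u v : ℝ → ℝ} (hu : Continuous u) (hv : Continuous v) {ε r : ℝ}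
    (hr : 0 < r) (huv : ∀ t, u t ≤ v t + ε) : symmetricMean u r ≤ symmetricMean v r + ε := by
  have hint := intervalIntegral_le_mul_add hu hv (neg_le_self hr.le) fun t =>
    (huv t).trans_eq (add_comm _ _)
  calc symmetricMean u r ≤ (1 / (2 * r)) * ((r - -r) * ε + ∫ s in (-r)..r, v s) :=
        mul_le_mul_of_nonneg_left hint (by positivity)
    _ = symmetricMean v r + ε := by
        unfold symmetricMean
        field_simp
        ring

theorem tendsto_symmetricMean_zero_of_forall_le_add {w : ℝ → ℝ} (hw : Continuous w) (hw0 : 0 ≤ w)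
    (h : ∀ ε > 0, ∃ u : ℝ → ℝ, Continuous u ∧ Tendsto (symmetricMean u) atTop (𝓝 0) ∧
      ∀ t, w t ≤ u t + ε) :
    Tendsto (symmetricMean w) atTop (𝓝 0) := by
  refine tendsto_order.2 ⟨fun a ha => ?_, fun a ha => ?_⟩
  · filter_upwards [eventually_ge_atTop 0] with r hr using ha.trans_le (symmetricMean_nonneg hw0 hr)
  · obtain ⟨u, hu, hmean, hwu⟩ := h (a / 2) (half_pos ha)
    filter_upwards [eventually_gt_atTop 0, hmean.eventually (gt_mem_nhds (half_pos ha))]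
      with r hr hur
    linarith [symmetricMean_le_add hw hu hr hwu]

namespace PAPZeroFn

theorem of_forall_norm_le_add {φ : ℝ → Z} (hc : Continuous φ) (hb : ∃ M, ∀ t, ‖φ t‖ ≤ M)
    (h : ∀ ε > 0, ∃ u : ℝ → ℝ, Continuous u ∧ Tendsto (symmetricMean u) atTop (𝓝 0) ∧
      ∀ t, ‖φ t‖ ≤ u t + ε) :
    PAPZeroFn φ :=
  ⟨hc, hb, tendsto_symmetricMean_zero_of_forall_le_add hc.norm (fun _ => norm_nonneg _) h⟩

theorem tendsto_symmetricMean {φ : ℝ → Z} (hφ : PAPZeroFn φ) :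
    Tendsto (symmetricMean fun t => ‖φ t‖) atTop (𝓝 0) :=
  hφ.2.2

theorem zero : PAPZeroFn (0 : ℝ → Z) :=
  ⟨continuous_const, ⟨0, fun _ => by simp⟩, by simp⟩

theorem add {φ ψ : ℝ → Z} (hφ : PAPZeroFn φ) (hψ : PAPZeroFn ψ) : PAPZeroFn (φ + ψ) := by
  obtain ⟨M, hM⟩ := hφ.2.1
  obtain ⟨N, hN⟩ := hψ.2.1
  refine of_forall_norm_le_add (hφ.1.add hψ.1)
    ⟨M + N, fun t => (norm_add_le _ _).trans (add_le_add (hM t) (hN t))⟩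
    fun ε hε => ⟨fun t => ‖φ t‖ + ‖ψ t‖, hφ.1.norm.add hψ.1.norm, ?_,
      fun t => (norm_add_le _ _).trans (le_add_of_nonneg_right hε.le)⟩
  have hsum := hφ.tendsto_symmetricMean.add hψ.tendsto_symmetricMean
  rw [add_zero] at hsum
  exact hsum.congr fun r => (symmetricMean_add hφ.1.norm hψ.1.norm r).symm

theorem neg {φ : ℝ → Z} (hφ : PAPZeroFn φ) : PAPZeroFn (-φ) := by
  obtain ⟨hc, ⟨M, hM⟩, hm⟩ := hφ
  exact ⟨hc.neg, ⟨M, by simpa using hM⟩, by simpa using hm⟩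

theorem sub {φ ψ : ℝ → Z} (hφ : PAPZeroFn φ) (hψ : PAPZeroFn ψ) : PAPZeroFn (φ - ψ) := by
  simpa only [sub_eq_add_neg] using hφ.add hψ.neg

theorem const_smul {𝕜 : Type*} [NormedField 𝕜] [NormedSpace 𝕜 Z] (c : 𝕜) {φ : ℝ → Z}
    (hφ : PAPZeroFn φ) : PAPZeroFn (c • φ) := by
  obtain ⟨M, hM⟩ := hφ.2.1
  refine of_forall_norm_le_add (hφ.1.const_smul c)
    ⟨‖c‖ * M, fun t => by simpa [norm_smul] using mul_le_mul_of_nonneg_left (hM t) (norm_nonneg c)⟩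
    fun ε hε => ⟨fun t => ‖c‖ * ‖φ t‖, continuous_const.mul hφ.1.norm, ?_,
      fun t => by simpa [norm_smul] using hε.le⟩
  have hscaled := hφ.tendsto_symmetricMean.const_mul ‖c‖
  rw [mul_zero] at hscaled
  exact hscaled.congr fun r => (symmetricMean_const_mul ‖c‖ _ r).symm

end PAPZeroFn

theorem isClosed_setOf_papZeroFn : IsClosed {φ : ℝ →ᵇ Z | PAPZeroFn φ} := by
  refine IsSeqClosed.isClosed fun φ Φ hφ hφΦ => PAPZeroFn.of_forall_norm_le_add Φ.continuous
    ⟨‖Φ‖, Φ.norm_coe_le_norm⟩ fun ε hε => ?_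
  obtain ⟨n, hn⟩ := (hφΦ.eventually (Metric.ball_mem_nhds Φ hε)).exists
  refine ⟨fun t => ‖φ n t‖, (φ n).continuous.norm, (hφ n).tendsto_symmetricMean, fun t => ?_⟩
  calc ‖Φ t‖ ≤ ‖φ n t‖ + ‖Φ t - φ n t‖ := norm_le_norm_add_norm_sub' _ _
    _ ≤ ‖φ n t‖ + ε := by
        rw [← dist_eq_norm, dist_comm]
        exact add_le_add le_rfl ((BoundedContinuousFunction.dist_coe_le_dist t).trans hn.le)

theorem integral_integral_comp_add_le {h : ℝ → ℝ} (hh : Continuous h) (hh0 : 0 ≤ h)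
    {α β R₁ R₂ T : ℝ} (hαβ : α ≤ β) (hR : R₁ ≤ R₂) (hT₁ : -T ≤ R₁ + α) (hT₂ : R₂ + β ≤ T) :
    ∫ a in R₁..R₂, ∫ x in α..β, h (x + a) ≤ (β - α) * ∫ s in (-T)..T, h s := by
  have hcont : Continuous (Function.uncurry fun a x => h (x + a)) := by fun_prop
  rw [intervalIntegral_intervalIntegral_swap ((hcont.continuousOn.integrableOn_compact
    (isCompact_uIcc.prod isCompact_uIcc)).mono_set
    (Set.prod_mono Set.uIoc_subset_uIcc Set.uIoc_subset_uIcc))]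
  calc ∫ x in α..β, ∫ a in R₁..R₂, h (x + a) ≤ ∫ _ in α..β, ∫ s in (-T)..T, h s := by
        refine intervalIntegral.integral_mono_on hαβ ?_ intervalIntegrable_const fun x hx => ?_
        · exact (intervalIntegral.continuous_parametric_intervalIntegral_of_continuous'
            (by fun_prop) R₁ R₂).intervalIntegrable _ _
        · rw [intervalIntegral.integral_comp_add_left h x]
          exact intervalIntegral.integral_mono_interval (by linarith [hx.1]) (by linarith)
            (by linarith [hx.2]) (ae_of_all _ fun s => hh0 s) (hh.intervalIntegrable _ _)
    _ = (β - α) * ∫ s in (-T)..T, h s := by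
        rw [intervalIntegral.integral_const, smul_eq_mul]

theorem integral_sum_integral_comp_add_le {h : ℝ → ℝ} (hh : Continuous h) (hh0 : 0 ≤ h)
    {α β R₁ R₂ T : ℝ} (C : Finset ℝ) (hαβ : α ≤ β) (hR : R₁ ≤ R₂)
    (hT₁ : ∀ c ∈ C, -T ≤ R₁ + c + α) (hT₂ : ∀ c ∈ C, R₂ + c + β ≤ T) :
    ∫ a in R₁..R₂, ∑ c ∈ C, ∫ x in α..β, h (x + (a + c)) ≤
      C.card * (β - α) * ∫ s in (-T)..T, h s := by
  have hW : Continuous fun a => ∫ x in α..β, h (x + a) :=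
    intervalIntegral.continuous_parametric_intervalIntegral_of_continuous' (by fun_prop) α β
  rw [intervalIntegral.integral_finsetSum (f := fun c a => ∫ x in α..β, h (x + (a + c)))
    fun c _ => (hW.comp (continuous_add_const c)).intervalIntegrable _ _]
  calc ∑ c ∈ C, ∫ a in R₁..R₂, ∫ x in α..β, h (x + (a + c))
      ≤ ∑ _c ∈ C, (β - α) * ∫ s in (-T)..T, h s := by
        refine Finset.sum_le_sum fun c hc => ?_
        rw [intervalIntegral.integral_comp_add_right (fun a => ∫ x in α..β, h (x + a)) c]
        exact integral_integral_comp_add_le hh hh0 hαβ (by linarith) (by linarith [hT₁ c hc])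
          (by linarith [hT₂ c hc])
    _ = C.card * (β - α) * ∫ s in (-T)..T, h s := by
        rw [Finset.sum_const, nsmul_eq_mul, mul_assoc]

theorem exists_ge_forall_integral_comp_add_lt {h : ℝ → ℝ} (hh : Continuous h) (hh0 : 0 ≤ h)
    (hmean : Tendsto (symmetricMean h) atTop (𝓝 0)) {α β : ℝ} (hαβ : α ≤ β) (C : Finset ℝ)
    {ε : ℝ} (hε : 0 < ε) (R₀ : ℝ) :
    ∃ a ≥ R₀, ∀ c ∈ C, ∫ x in α..β, h (x + (a + c)) < ε := by
  by_contra! hlarge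
  set D := ∑ c ∈ C, |c| + |α| + |β| with hD
  have hcD : ∀ c ∈ C, |c| ≤ ∑ c ∈ C, |c| := fun c hc =>
    Finset.single_le_sum (f := fun c => |c|) (fun _ _ => abs_nonneg _) hc
  set K := (C.card : ℝ) * (β - α)
  obtain ⟨T, hTmean, hTlarge⟩ := ((((hmean.const_mul K).eventually
    (gt_mem_nhds (by linarith : K * 0 < ε / 4)))).and
    (eventually_ge_atTop (2 * (D + |R₀|) + 1))).exists
  have hD0 : 0 ≤ D := by positivity
  have hT : 0 < T := by linarith [abs_nonneg R₀]
  have hhalf : T / 2 ≤ T - D - R₀ := by linarith [le_abs_self R₀]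
  have hlower : ε * (T - D - R₀) ≤ ∫ a in R₀..(T - D), ∑ c ∈ C, ∫ x in α..β, h (x + (a + c)) := by
    have hW : Continuous fun a => ∑ c ∈ C, ∫ x in α..β, h (x + (a + c)) :=
      continuous_finsetSum _ fun c _ =>
        intervalIntegral.continuous_parametric_intervalIntegral_of_continuous' (by fun_prop) α β
    calc ε * (T - D - R₀) = ∫ _ in R₀..(T - D), ε := by
          rw [intervalIntegral.integral_const, smul_eq_mul, mul_comm]
      _ ≤ ∫ a in R₀..(T - D), ∑ c ∈ C, ∫ x in α..β, h (x + (a + c)) := by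
          refine intervalIntegral.integral_mono_on (by linarith) intervalIntegrable_const
            (hW.intervalIntegrable _ _) fun a ha => ?_
          obtain ⟨c, hc, hεc⟩ := hlarge a ha.1
          exact hεc.trans (Finset.single_le_sum (f := fun c => ∫ x in α..β, h (x + (a + c)))
            (fun c _ => intervalIntegral.integral_nonneg hαβ fun x _ => hh0 _) hc)
  have hupper := integral_sum_integral_comp_add_le hh hh0 C hαβ (by linarith)
    (T := T) (R₁ := R₀) (R₂ := T - D)
    (fun c hc => by linarith [neg_abs_le R₀, neg_abs_le α, abs_nonneg β, (abs_le.1 (hcD c hc)).1])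
    (fun c hc => by linarith [le_abs_self β, abs_nonneg α, (abs_le.1 (hcD c hc)).2])
  have hmeanT : ∫ s in (-T)..T, h s = 2 * T * symmetricMean h T := by
    unfold symmetricMean
    field_simp
  have : ε * (T / 2) < ε * (T / 2) :=
    calc ε * (T / 2) ≤ ε * (T - D - R₀) := by gcongr
      _ ≤ K * ∫ s in (-T)..T, h s := hlower.trans hupper
      _ = 2 * T * (K * symmetricMean h T) := by rw [hmeanT]; ring
      _ < 2 * T * (ε / 4) := by gcongr
      _ = ε * (T / 2) := by ring
  exact lt_irrefl _ this

theorem exists_seq_forall_integral_comp_add_sub_lt {h : ℝ → ℝ} (hh : Continuous h)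
    (hh0 : 0 ≤ h) (hmean : Tendsto (symmetricMean h) atTop (𝓝 0)) {α β : ℝ} (hαβ : α ≤ β) :
    ∃ s : ℕ → ℝ, ∀ n m, n < m → ∫ x in α..β, h (x + (s m - s n)) < 1 / ((m : ℝ) + 1) := by
  -- the first coordinate is a strictly increasing index that sets the tolerance
  obtain ⟨f, -, hf⟩ := exists_seq_of_forall_finset_exists (fun _ : ℕ × ℝ => True)
    (fun p q => p.1 < q.1 ∧ ∫ x in α..β, h (x + (q.2 - p.2)) < 1 / ((q.1 : ℝ) + 1))
    fun S _ => by
      obtain ⟨a, -, ha⟩ := exists_ge_forall_integral_comp_add_lt hh hh0 hmean hαβ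
        (S.image fun p => -p.2) (ε := 1 / ((S.sup Prod.fst + 1 : ℕ) + 1)) (by positivity) 0
      refine ⟨(S.sup Prod.fst + 1, a), trivial,
        fun p hp => ⟨Nat.lt_succ_of_le (Finset.le_sup hp), ?_⟩⟩
      simpa [sub_eq_add_neg] using ha (-p.2) (Finset.mem_image_of_mem _ hp)
  have hmono : StrictMono fun n => (f n).1 :=
    strictMono_nat_of_lt_succ fun n => (hf n (n + 1) n.lt_succ_self).1
  refine ⟨fun n => (f n).2, fun n m hnm => (hf n m hnm).2.trans_le ?_⟩
  gcongr
  exact_mod_cast hmono.id_le m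

theorem intervalIntegral_le_of_tendsto {u : ℕ → ℝ → ℝ} {v : ℝ → ℝ} {C : ℕ → ℝ} {α β B c : ℝ}
    (hu : ∀ n, AEStronglyMeasurable (u n)) (hB : ∀ n x, ‖u n x‖ ≤ B)
    (huv : ∀ x, Tendsto (fun n => u n x) atTop (𝓝 (v x))) (hC : Tendsto C atTop (𝓝 c))
    (hle : ∀ᶠ n in atTop, ∫ x in α..β, u n x ≤ C n) :
    ∫ x in α..β, v x ≤ c :=
  le_of_tendsto_of_tendsto (intervalIntegral.tendsto_integral_filter_of_dominated_convergence
    (fun _ => B) (Eventually.of_forall fun n => (hu n).restrict)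
    (Eventually.of_forall fun n => ae_of_all _ fun x _ => hB n x) intervalIntegrable_const
    (ae_of_all _ fun x _ => huv x)) hC hle

theorem le_of_forall_intervalIntegral_le {u : ℝ → ℝ} (hu : Continuous u) {M : ℝ}
    (h : ∀ α β, α < β → ∫ x in α..β, u x ≤ (β - α) * M) (t : ℝ) : u t ≤ M := by
  by_contra! hlt
  obtain ⟨δ, hδ, hball⟩ := Metric.isOpen_iff.1 (isOpen_lt continuous_const hu) t hlt
  have hpos : 0 < ∫ x in (t - δ)..(t + δ), (u x - M) :=
    intervalIntegral.intervalIntegral_pos_of_pos_on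
      ((hu.sub continuous_const).intervalIntegrable _ _)
      (fun x hx => sub_pos.2 (hball (by
        rw [Metric.mem_ball, Real.dist_eq, abs_lt]
        constructor <;> linarith [hx.1, hx.2])))
      (by linarith)
  rw [intervalIntegral.integral_sub (hu.intervalIntegrable _ _) intervalIntegrable_const,
    intervalIntegral.integral_const, smul_eq_mul] at hpos
  linarith [h (t - δ) (t + δ) (by linarith)]

theorem AlmostAutomorphicFn.norm_le_of_forall_norm_add_le {g φ : ℝ → Z}
    (hg : AlmostAutomorphicFn g) (hφ : PAPZeroFn φ) {M : ℝ} (hM : ∀ t, ‖g t + φ t‖ ≤ M)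
    (t : ℝ) : ‖g t‖ ≤ M := by
  refine le_of_forall_intervalIntegral_le hg.1.norm (fun α β hαβ => ?_) t
  obtain ⟨B, hB⟩ := hg.exists_norm_le_s15
  have hgφ : ∀ t, ‖g t‖ ≤ M + ‖φ t‖ := fun t =>
    calc ‖g t‖ = ‖(g t + φ t) - φ t‖ := by rw [add_sub_cancel_right]
      _ ≤ ‖g t + φ t‖ + ‖φ t‖ := norm_sub_le _ _
      _ ≤ M + ‖φ t‖ := add_le_add (hM t) le_rfl
  obtain ⟨s, hs⟩ := exists_seq_forall_integral_comp_add_sub_lt hφ.1.norm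
    (fun _ => norm_nonneg _) hφ.tendsto_symmetricMean hαβ.le
  obtain ⟨k, hk, g', hg'₁, hg'₂⟩ := hg.2 s
  have hg'B : ∀ t, ‖g' t‖ ≤ B := fun t =>
    le_of_tendsto (hg'₁ t).norm (Eventually.of_forall fun _ => hB _)
  have hg'meas : StronglyMeasurable g' :=
    stronglyMeasurable_of_tendsto atTop
      (fun n => (hg.1.comp (continuous_add_const (s (k n)))).stronglyMeasurable)
      (tendsto_pi_nhds.2 hg'₁)
  have hshift : ∀ n m, n < m →
      ∫ x in α..β, ‖g (x + (s (k m) - s (k n)))‖ ≤ (β - α) * M + 1 / ((m : ℝ) + 1) := by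
    intro n m hnm
    have hgc := hg.1
    have hφc := hφ.1
    refine (intervalIntegral_le_mul_add (by fun_prop) (by fun_prop) hαβ.le fun x => hgφ _).trans
      (add_le_add le_rfl ((hs _ _ (hk hnm)).le.trans ?_))
    gcongr
    exact_mod_cast hk.id_le m
  have hlimit : ∀ n, ∫ x in α..β, ‖g' (x - s (k n))‖ ≤ (β - α) * M := fun n =>
    intervalIntegral_le_of_tendsto (u := fun m x => ‖g (x + (s (k m) - s (k n)))‖)
      (fun m => (hg.1.comp (continuous_add_const _)).norm.aestronglyMeasurable)
      (fun m x => by rw [norm_norm]; exact hB _)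
      (fun x => (hg'₁ (x - s (k n))).norm.congr fun m => by ring_nf)
      (by simpa using tendsto_one_div_add_atTop_nhds_zero_nat.const_add ((β - α) * M))
      ((eventually_gt_atTop n).mono fun m hnm => hshift n m hnm)
  exact intervalIntegral_le_of_tendsto (u := fun n x => ‖g' (x - s (k n))‖)
    (fun n => (hg'meas.comp_measurable (measurable_sub_const _)).norm.aestronglyMeasurable)
    (fun n x => by rw [norm_norm]; exact hg'B _) (fun x => (hg'₂ x).norm) tendsto_const_nhds
    (Eventually.of_forall hlimit)

namespace PseudoAlmostAutomorphicFn

theorem zero : PseudoAlmostAutomorphicFn (0 : ℝ → Z) :=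
  ⟨continuous_const, ⟨0, fun _ => by simp⟩, 0, 0, AlmostAutomorphicFn.zero, PAPZeroFn.zero,
    fun _ => by simp⟩

theorem add {f₁ f₂ : ℝ → Z} (hf₁ : PseudoAlmostAutomorphicFn f₁)
    (hf₂ : PseudoAlmostAutomorphicFn f₂) : PseudoAlmostAutomorphicFn (f₁ + f₂) := by
  obtain ⟨hc₁, ⟨M₁, hM₁⟩, g₁, φ₁, hg₁, hφ₁, hfgφ₁⟩ := hf₁
  obtain ⟨hc₂, ⟨M₂, hM₂⟩, g₂, φ₂, hg₂, hφ₂, hfgφ₂⟩ := hf₂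
  refine ⟨hc₁.add hc₂, ⟨M₁ + M₂, fun t => (norm_add_le _ _).trans (add_le_add (hM₁ t) (hM₂ t))⟩,
    g₁ + g₂, φ₁ + φ₂, hg₁.add hg₂, hφ₁.add hφ₂, fun t => ?_⟩
  simp only [Pi.add_apply, hfgφ₁, hfgφ₂]
  abel

theorem const_smul {𝕜 : Type*} [NormedField 𝕜] [NormedSpace 𝕜 Z] (c : 𝕜) {f : ℝ → Z}
    (hf : PseudoAlmostAutomorphicFn f) : PseudoAlmostAutomorphicFn (c • f) := by
  obtain ⟨hc, ⟨M, hM⟩, g, φ, hg, hφ, hfgφ⟩ := hf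
  refine ⟨hc.const_smul c, ⟨‖c‖ * M, fun t => ?_⟩, c • g, c • φ, hg.const_smul c,
    hφ.const_smul c, fun t => by simp only [Pi.smul_apply, hfgφ, smul_add]⟩
  rw [Pi.smul_apply, norm_smul]
  exact mul_le_mul_of_nonneg_left (hM t) (norm_nonneg c)

end PseudoAlmostAutomorphicFn

theorem BoundedContinuousFunction.pseudoAlmostAutomorphicFn_iff (f : ℝ →ᵇ Z) :
    PseudoAlmostAutomorphicFn f ↔ ∃ g : ℝ →ᵇ Z, AlmostAutomorphicFn g ∧ PAPZeroFn ⇑(f - g) := by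
  constructor
  · rintro ⟨-, -, g, φ, hg, hφ, hfgφ⟩
    obtain ⟨C, hC⟩ := hg.exists_norm_le_s15
    refine ⟨.ofNormedAddCommGroup g hg.1 C hC, hg, ?_⟩
    convert hφ using 1
    ext t
    simp [hfgφ]
  · rintro ⟨g, hg, hφ⟩
    exact ⟨f.continuous, ⟨‖f‖, f.norm_coe_le_norm⟩, g, ⇑(f - g), hg, hφ, fun t => by simp⟩

theorem BoundedContinuousFunction.dist_le_dist_of_almostAutomorphicFn {f₁ f₂ g₁ g₂ : ℝ →ᵇ Z}
    (hg₁ : AlmostAutomorphicFn g₁) (hg₂ : AlmostAutomorphicFn g₂)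
    (hφ₁ : PAPZeroFn ⇑(f₁ - g₁)) (hφ₂ : PAPZeroFn ⇑(f₂ - g₂)) : dist g₁ g₂ ≤ dist f₁ f₂ := by
  refine (BoundedContinuousFunction.dist_le dist_nonneg).2 fun t => ?_
  rw [dist_eq_norm]
  refine (hg₁.sub hg₂).norm_le_of_forall_norm_add_le (hφ₁.sub hφ₂) (fun t => ?_) t
  have : (⇑g₁ - ⇑g₂) t + (⇑(f₁ - g₁) - ⇑(f₂ - g₂)) t = f₁ t - f₂ t := by
    simp only [Pi.sub_apply, BoundedContinuousFunction.coe_sub]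
    abel
  rw [this, ← dist_eq_norm]
  exact BoundedContinuousFunction.dist_coe_le_dist t

theorem isClosed_setOf_pseudoAlmostAutomorphicFn [CompleteSpace Z] :
    IsClosed {f : ℝ →ᵇ Z | PseudoAlmostAutomorphicFn f} := by
  refine IsSeqClosed.isClosed fun F f hF hFf => ?_
  choose g hg hφ using fun n => (F n).pseudoAlmostAutomorphicFn_iff.1 (hF n)
  have hcauchy : CauchySeq g := by
    refine Metric.cauchySeq_iff.2 fun ε hε => ?_
    obtain ⟨N, hN⟩ := Metric.cauchySeq_iff.1 hFf.cauchySeq ε hε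
    exact ⟨N, fun m hm n hn => (BoundedContinuousFunction.dist_le_dist_of_almostAutomorphicFn
      (hg m) (hg n) (hφ m) (hφ n)).trans_lt (hN m hm n hn)⟩
  obtain ⟨G, hgG⟩ := cauchySeq_tendsto_of_complete hcauchy
  exact f.pseudoAlmostAutomorphicFn_iff.2 ⟨G,
    isClosed_setOf_almostAutomorphicFn.mem_of_tendsto hgG (Eventually.of_forall hg),
    isClosed_setOf_papZeroFn.mem_of_tendsto (hFf.sub hgG) (Eventually.of_forall hφ)⟩

end

theorem PAA_closed_subspace_of_BC
    {X : Type*} [NormedAddCommGroup X] [NormedSpace ℝ X] [CompleteSpace X] :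
    IsClosed {f : BoundedContinuousFunction ℝ X |
      PseudoAlmostAutomorphicFn (fun t : ℝ => f t)} ∧
    IsComplete {f : BoundedContinuousFunction ℝ X |
      PseudoAlmostAutomorphicFn (fun t : ℝ => f t)} ∧
    PseudoAlmostAutomorphicFn (fun t : ℝ => (0 : BoundedContinuousFunction ℝ X) t) ∧
    (∀ f g : BoundedContinuousFunction ℝ X,
      PseudoAlmostAutomorphicFn (fun t : ℝ => f t) →
      PseudoAlmostAutomorphicFn (fun t : ℝ => g t) →
      PseudoAlmostAutomorphicFn (fun t : ℝ => (f + g) t)) ∧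
    (∀ (a : ℝ) (f : BoundedContinuousFunction ℝ X),
      PseudoAlmostAutomorphicFn (fun t : ℝ => f t) →
      PseudoAlmostAutomorphicFn (fun t : ℝ => (a • f) t)) ∧
    (∀ (F : ℕ → BoundedContinuousFunction ℝ X) (f : BoundedContinuousFunction ℝ X),
      (∀ n : ℕ, PseudoAlmostAutomorphicFn (fun t : ℝ => F n t)) →
      Tendsto F atTop (𝓝 f) →
      PseudoAlmostAutomorphicFn (fun t : ℝ => f t)) := by
  have hclosed : IsClosed {f : ℝ →ᵇ X | PseudoAlmostAutomorphicFn f} :=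
    isClosed_setOf_pseudoAlmostAutomorphicFn
  refine ⟨hclosed, hclosed.isComplete, PseudoAlmostAutomorphicFn.zero,
    fun f g hf hg => ?_, fun a f hf => ?_,
    fun F f hF hFf => hclosed.mem_of_tendsto hFf (Eventually.of_forall hF)⟩
  · rw [BoundedContinuousFunction.coe_add]
    exact hf.add hg
  · rw [BoundedContinuousFunction.coe_smul]
    exact hf.const_smul a
end
end
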